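/- arXiv:math/0504290 — 7 statements merged into one kernel-verified Lean document; each statement's English description precedes it below -/
import Mathlib

section
/- In the algebra YB_R(A_{n-1}), for every z ∈ R the quantum Yang–Baxter equations h_{ab}(z) h_{ac}(z) h_{bc}(z) = h_{bc}(z) h_{ac}(z) h_{ab}(z) hold for all 1 ≤ a < b < c ≤ n; that is, they are consequences of the defining relations (0)–(4). -/
namespace Stmt2

/-- `i` is in the index range `{1, …, n}`. -/
def inR (n i : ℕ) : Prop := 1 ≤ i ∧ i ≤ n

/-- The defining relations (0)–(4) of the algebra `YB_R(A_{n-1})` for elements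
`h i j x` (`1 ≤ i ≠ j ≤ n`, `x ∈ R`) of an associative `R`-algebra `A`,
where `R` is a commutative `ℚ`-algebra. -/
structure YBARels (n : ℕ) (R : Type*) [CommRing R] [Algebra ℚ R]
    {A : Type*} [Ring A] [Algebra R A] (h : ℕ → ℕ → R → A) : Prop where
  rel0 : ∀ i j (x : R), inR n i → inR n j → i ≠ j → h i j x * h j i x = 1
  rel1 : ∀ i j (x y : R), inR n i → inR n j → i ≠ j →
      h i j x * h i j y = h i j (x + y)
  rel2 : ∀ i j k l (x y : R), inR n i → inR n j → inR n k → inR n l →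
      i ≠ j → i ≠ k → i ≠ l → j ≠ k → j ≠ l → k ≠ l →
      h i j x * h k l y = h k l y * h i j x
  rel3a : ∀ i j k (x y : R), 1 ≤ i → i < j → j < k → k ≤ n →
      h i j x * h j k y + h i k (x + y) = h j k y * h i k x + h i k y * h i j x
  rel3b : ∀ i j k (x y : R), 1 ≤ i → i < j → j < k → k ≤ n →
      h j k y * h i j x + h i k (x + y) = h i k x * h j k y + h i j x * h i k y
  rel4 : ∀ i j k (x y : R), 1 ≤ i → i < j → j < k → k ≤ n →
      h i k x * (h i j x - h i k y) * h i j y = h i j y * (h i j x - h i k y) * h i k x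

/-- The multiplicative (RSM) Dunkl element
`Θ_j(z) = h_{j-1,j}(z)⁻¹ ⋯ h_{1,j}(z)⁻¹ · h_{j,n}(z) ⋯ h_{j,j+1}(z)`,
where `h_{ij}(z)⁻¹ = h_{ij}(-z)`. -/
def ThetaA (n : ℕ) {R : Type*} [CommRing R] {A : Type*} [Ring A]
    (h : ℕ → ℕ → R → A) (z : R) (j : ℕ) : A :=
  ((List.range' 1 (j - 1)).reverse.map fun i => h i j (-z)).prod *
    ((List.range' (j + 1) (n - j)).reverse.map fun k => h j k z).prod

/-- the quantum Yang–Baxter equation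
`h_{ab}(z) h_{ac}(z) h_{bc}(z) = h_{bc}(z) h_{ac}(z) h_{ab}(z)` for `1 ≤ a < b < c ≤ n`
is a consequence of the defining relations (0)–(4) of `YB_R(A_{n-1})`. -/
theorem quantum_yang_baxter_in_YBA (n : ℕ) (hn : 2 ≤ n)
    (R : Type*) [CommRing R] [Algebra ℚ R] (A : Type*) [Ring A] [Algebra R A]
    (h : ℕ → ℕ → R → A) (rels : YBARels n R h) :
    ∀ (a b c : ℕ) (z : R), 1 ≤ a → a < b → b < c → c ≤ n →
      h a b z * h a c z * h b c z = h b c z * h a c z * h a b z := by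
  intro a b c z ha hab hbc hcn
  have hia : inR n a := ⟨ha, le_of_lt (lt_of_lt_of_le (lt_trans hab hbc) hcn)⟩
  have hic : inR n c := ⟨le_trans ha (le_of_lt (lt_trans hab hbc)), hcn⟩
  have hac : a ≠ c := Nat.ne_of_lt (lt_trans hab hbc)
  set u := h a b z with hu
  set v := h a c z with hv
  set w := h b c z with hw
  have hvv : v * v = h a c (z + z) := rels.rel1 a c z z hia hic hac
  have h1 : u * w + h a c (z + z) = w * v + v * u := rels.rel3a a b c z z ha hab hbc hcn
  have h2 : w * u + h a c (z + z) = v * w + u * v := rels.rel3b a b c z z ha hab hbc hcn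
  have h4 : v * (u - v) * u = u * (u - v) * v := rels.rel4 a b c z z ha hab hbc hcn
  rw [← hvv] at h1 h2
  have key : u * v * w - w * v * u =
      ((u * w + v * v) * u - (w * v + v * u) * u)
        - (u * (w * u + v * v) - u * (v * w + u * v))
        - (u * (u - v) * v - v * (u - v) * u) := by noncomm_ring
  rw [h1, h2, h4] at key
  have key2 : u * v * w - w * v * u = 0 := by rw [key]; noncomm_ring
  exact sub_eq_zero.mp key2

end Stmt2
end

section
/- In the algebra YB_R(A_{n-1}), for every z ∈ R the elements Θ_1(z), …, Θ_n(z) pairwise commute: Θ_j(z) Θ_k(z) = Θ_k(z) Θ_j(z) for all 1 ≤ j, k ≤ n. -/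
namespace Stmt3

/-- `i` is in the index range `{1, …, n}`. -/
def inR (n i : ℕ) : Prop := 1 ≤ i ∧ i ≤ n

/-- The defining relations (0)–(4) of the algebra `YB_R(A_{n-1})` for elements
`h i j x` (`1 ≤ i ≠ j ≤ n`, `x ∈ R`) of an associative `R`-algebra `A`,
where `R` is a commutative `ℚ`-algebra. -/
structure YBARels (n : ℕ) (R : Type*) [CommRing R] [Algebra ℚ R]
    {A : Type*} [Ring A] [Algebra R A] (h : ℕ → ℕ → R → A) : Prop where
  rel0 : ∀ i j (x : R), inR n i → inR n j → i ≠ j → h i j x * h j i x = 1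
  rel1 : ∀ i j (x y : R), inR n i → inR n j → i ≠ j →
      h i j x * h i j y = h i j (x + y)
  rel2 : ∀ i j k l (x y : R), inR n i → inR n j → inR n k → inR n l →
      i ≠ j → i ≠ k → i ≠ l → j ≠ k → j ≠ l → k ≠ l →
      h i j x * h k l y = h k l y * h i j x
  rel3a : ∀ i j k (x y : R), 1 ≤ i → i < j → j < k → k ≤ n →
      h i j x * h j k y + h i k (x + y) = h j k y * h i k x + h i k y * h i j x
  rel3b : ∀ i j k (x y : R), 1 ≤ i → i < j → j < k → k ≤ n →
      h j k y * h i j x + h i k (x + y) = h i k x * h j k y + h i j x * h i k y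
  rel4 : ∀ i j k (x y : R), 1 ≤ i → i < j → j < k → k ≤ n →
      h i k x * (h i j x - h i k y) * h i j y = h i j y * (h i j x - h i k y) * h i k x

/-- The multiplicative (RSM) Dunkl element
`Θ_j(z) = h_{j-1,j}(z)⁻¹ ⋯ h_{1,j}(z)⁻¹ · h_{j,n}(z) ⋯ h_{j,j+1}(z)`,
where `h_{ij}(z)⁻¹ = h_{ij}(-z)`. -/
def ThetaA (n : ℕ) {R : Type*} [CommRing R] {A : Type*} [Ring A]
    (h : ℕ → ℕ → R → A) (z : R) (j : ℕ) : A :=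
  ((List.range' 1 (j - 1)).reverse.map fun i => h i j (-z)).prod *
    ((List.range' (j + 1) (n - j)).reverse.map fun k => h j k z).prod

end Stmt3

/-! For `j < k` write `g = h_{jk}(z)` and split the factors of `Θ_j` and `Θ_k` according to
where their other index lies (below `j`, between `j` and `k`, above `k`):
`Θ_j = U · (D · g · E)` and `Θ_k = (C · g⁻¹ · B) · V`, with
`U = ∏_{i<j} h_{ij}(-z)`, `D = ∏_{m>k} h_{jm}(z)`, `E = ∏_{j<m<k} h_{jm}(z)`,
`C = ∏_{j<m<k} h_{mk}(-z)`, `B = ∏_{i<j} h_{ik}(-z)`, `V = ∏_{m>k} h_{km}(z)`.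
Relations (3) and (4) with `x = y` give the braid relation
`h_{ij}(x) h_{ik}(x) h_{jk}(x) = h_{jk}(x) h_{ik}(x) h_{ij}(x)`, so conjugation by `g^{±1}`
reverses each pair of matching factors of `E · C`, `B · U` and `D · V`. After these moves the
two copies of `g` cancel, and locality (2) brings both products to the word `C U B D V E`. -/

theorem List.range'_eq_append_cons {s len m : ℕ} (hs : s ≤ m) (hm : m < s + len) :
    List.range' s len =
      List.range' s (m - s) ++ m :: List.range' (m + 1) (s + len - (m + 1)) := by
  refine List.range'_eq_append_iff.2 ⟨m - s, by omega, rfl, Eq.symm ?_⟩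
  exact List.range'_eq_cons_iff.2 ⟨by omega, by omega, by congr 1; omega⟩

theorem Commute.list_prod_map {ι M : Type*} [Monoid M] {l₁ l₂ : List ι} {f g : ι → M}
    (h : ∀ a ∈ l₁, ∀ b ∈ l₂, Commute (f a) (g b)) :
    Commute (l₁.map f).prod (l₂.map g).prod :=
  Commute.list_prod_left _ _ <| List.forall_mem_map.2 fun a ha =>
    Commute.list_prod_right _ _ <| List.forall_mem_map.2 fun b hb => h a ha b hb

theorem List.semiconjBy_prod_map_mul_prod_map {ι M : Type*} [Monoid M] (g : M)
    {l : List ι} {p q : ι → M} (hl : l.Nodup)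
    (hpq : ∀ a ∈ l, ∀ b ∈ l, a ≠ b → Commute (p a) (q b))
    (hg : ∀ a ∈ l, SemiconjBy g (p a * q a) (q a * p a)) :
    SemiconjBy g ((l.map p).prod * (l.map q).prod) ((l.map q).prod * (l.map p).prod) := by
  induction l with
  | nil => simp
  | cons a t ih =>
    obtain ⟨hat, ht⟩ := List.nodup_cons.1 hl
    have hP : Commute (t.map p).prod (q a) := Commute.list_prod_left _ _ <|
      List.forall_mem_map.2 fun b hb =>
        hpq b (by simp [hb]) a (by simp) (ne_of_mem_of_not_mem hb hat)
    have hQ : Commute (t.map q).prod (p a) := Commute.list_prod_left _ _ <|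
      List.forall_mem_map.2 fun b hb =>
        (hpq a (by simp) b (by simp [hb]) (ne_of_mem_of_not_mem hb hat).symm).symm
    have htail := ih ht (fun a ha b hb => hpq a (by simp [ha]) b (by simp [hb]))
      fun a ha => hg a (by simp [ha])
    simpa only [List.map_cons, List.prod_cons, mul_assoc, hP.left_comm, hQ.left_comm] using
      (hg a (by simp)).mul_right htail

theorem commute_of_block_relations {M : Type*} [Monoid M] {U D g E C g' B V : M}
    (hgg' : g * g' = 1) (hg'g : g' * g = 1)
    (hE : SemiconjBy g (E * C) (C * E)) (hB : SemiconjBy g' (B * U) (U * B))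
    (hV : SemiconjBy g (D * V) (V * D))
    (hCU : Commute C U) (hBD : Commute B D) (hCD : Commute C D) (hEB : Commute E B)
    (hEV : Commute E V) (hVU : Commute V U) :
    Commute (U * (D * g * E)) (C * g' * B * V) := by
  have left : U * (D * g * E) * (C * g' * B * V) = U * D * C * E * B * V :=
    calc U * (D * g * E) * (C * g' * B * V) = U * D * (g * (E * C)) * g' * B * V := by
          simp only [mul_assoc]
      _ = U * D * C * E * (g * g') * B * V := by rw [hE.eq]; simp only [mul_assoc]
      _ = U * D * C * E * B * V := by rw [hgg', mul_one]
  have right : C * g' * B * V * (U * (D * g * E)) = C * U * B * D * V * E :=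
    calc C * g' * B * V * (U * (D * g * E)) = C * g' * B * (V * U) * D * g * E := by
          simp only [mul_assoc]
      _ = C * (g' * (B * U)) * ((V * D) * g) * E := by rw [hVU.eq]; simp only [mul_assoc]
      _ = C * U * B * (g' * g) * D * V * E := by rw [hB.eq, ← hV.eq]; simp only [mul_assoc]
      _ = C * U * B * D * V * E := by rw [hg'g, mul_one]
  rw [Commute, SemiconjBy, left, right]
  simp only [mul_assoc]
  rw [hCD.symm.left_comm, hEB.left_comm, hEV.eq, hCU.symm.left_comm, hBD.symm.left_comm]

theorem braid_of_quadratic_relations {A : Type*} [Ring A] {a b c : A}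
    (h3a : a * c + b * b = c * b + b * a) (h3b : c * a + b * b = b * c + a * b)
    (h4 : b * (a - b) * a = a * (a - b) * b) : a * b * c = c * b * a := by
  rw [← sub_eq_zero]
  calc a * b * c - c * b * a
      = a * (b * c + a * b - (c * a + b * b)) - (c * b + b * a - (a * c + b * b)) * a
          + (b * (a - b) * a - a * (a - b) * b) := by noncomm_ring
    _ = 0 := by rw [h3a, h3b, h4]; simp

namespace Stmt3

section ThetaBlocks

variable {n : ℕ} {R : Type*} [CommRing R] {A : Type*} [Ring A] {h : ℕ → ℕ → R → A}

theorem ThetaA_eq_of_lt_left (z : R) {j k : ℕ} (hjk : j < k) (hk : k ≤ n) :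
    ThetaA n h z j = ((List.range' 1 (j - 1)).reverse.map (h · j (-z))).prod *
      (((List.range' (k + 1) (n - k)).reverse.map (h j · z)).prod * h j k z *
        ((List.range' (j + 1) (k - j - 1)).reverse.map (h j · z)).prod) := by
  rw [ThetaA, List.range'_eq_append_cons (s := j + 1) (len := n - j) (m := k) (by omega)
    (by omega), show k - (j + 1) = k - j - 1 by omega,
    show j + 1 + (n - j) - (k + 1) = n - k by omega]
  simp [mul_assoc]

theorem ThetaA_eq_of_lt_right (z : R) {j k : ℕ} (hj : 1 ≤ j) (hjk : j < k) :
    ThetaA n h z k = ((List.range' (j + 1) (k - j - 1)).reverse.map (h · k (-z))).prod *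
      h j k (-z) * ((List.range' 1 (j - 1)).reverse.map (h · k (-z))).prod *
        ((List.range' (k + 1) (n - k)).reverse.map (h k · z)).prod := by
  rw [ThetaA, List.range'_eq_append_cons (s := 1) (len := k - 1) (m := j) (by omega)
    (by omega), show 1 + (k - 1) - (j + 1) = k - j - 1 by omega]
  simp [mul_assoc]

end ThetaBlocks

section YBA

variable {n : ℕ} {R : Type*} [CommRing R] [Algebra ℚ R] {A : Type*} [Ring A] [Algebra R A]
  {h : ℕ → ℕ → R → A}

namespace YBARels

theorem apply_zero (rels : YBARels n R h) {i j : ℕ} (hi : inR n i) (hj : inR n j)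
    (hij : i ≠ j) : h i j 0 = 1 := by
  have hidem : h i j 0 * h i j 0 = h i j 0 := by simpa using rels.rel1 i j 0 0 hi hj hij
  have hinv := rels.rel0 i j 0 hi hj hij
  calc h i j 0 = h i j 0 * h i j 0 * h j i 0 := by rw [mul_assoc, hinv, mul_one]
    _ = 1 := by rw [hidem, hinv]

theorem mul_apply_neg (rels : YBARels n R h) {i j : ℕ} (x : R) (hi : inR n i)
    (hj : inR n j) (hij : i ≠ j) : h i j x * h i j (-x) = 1 := by
  rw [rels.rel1 i j x (-x) hi hj hij, add_neg_cancel, rels.apply_zero hi hj hij]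

theorem apply_neg_mul (rels : YBARels n R h) {i j : ℕ} (x : R) (hi : inR n i)
    (hj : inR n j) (hij : i ≠ j) : h i j (-x) * h i j x = 1 := by
  rw [rels.rel1 i j (-x) x hi hj hij, neg_add_cancel, rels.apply_zero hi hj hij]

theorem commute (rels : YBARels n R h) {a b c d : ℕ} (x y : R) (ha : inR n a)
    (hb : inR n b) (hc : inR n c) (hd : inR n d) (hab : a ≠ b) (hac : a ≠ c) (had : a ≠ d)
    (hbc : b ≠ c) (hbd : b ≠ d) (hcd : c ≠ d) : Commute (h a b x) (h c d y) :=
  rels.rel2 a b c d x y ha hb hc hd hab hac had hbc hbd hcd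

theorem braid (rels : YBARels n R h) {i j k : ℕ} (x : R) (hi : 1 ≤ i) (hij : i < j)
    (hjk : j < k) (hk : k ≤ n) :
    h i j x * h i k x * h j k x = h j k x * h i k x * h i j x := by
  have hsq : h i k (x + x) = h i k x * h i k x :=
    (rels.rel1 i k x x ⟨hi, by omega⟩ ⟨by omega, hk⟩ (by omega)).symm
  have h3a := rels.rel3a i j k x x hi hij hjk hk
  have h3b := rels.rel3b i j k x x hi hij hjk hk
  rw [hsq] at h3a h3b
  exact braid_of_quadratic_relations h3a h3b (rels.rel4 i j k x x hi hij hjk hk)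

theorem semiconjBy_mul_apply_neg (rels : YBARels n R h) {i j k : ℕ} (x : R) (hi : 1 ≤ i)
    (hij : i < j) (hjk : j < k) (hk : k ≤ n) :
    SemiconjBy (h i k x) (h i j x * h j k (-x)) (h j k (-x) * h i j x) := by
  have hj : inR n j := ⟨by omega, by omega⟩
  have hk' : inR n k := ⟨by omega, hk⟩
  have hinv := rels.mul_apply_neg x hj hk' (by omega)
  have hinv' := rels.apply_neg_mul x hj hk' (by omega)
  calc h i k x * (h i j x * h j k (-x))
      = h j k (-x) * h j k x * (h i k x * h i j x) * h j k (-x) := by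
        rw [hinv', one_mul, mul_assoc]
    _ = h j k (-x) * (h j k x * h i k x * h i j x) * h j k (-x) := by simp only [mul_assoc]
    _ = h j k (-x) * (h i j x * h i k x) * (h j k x * h j k (-x)) := by
        rw [← rels.braid x hi hij hjk hk]; simp only [mul_assoc]
    _ = h j k (-x) * h i j x * h i k x := by rw [hinv, mul_one, mul_assoc]

end YBARels

theorem ThetaA_commute_of_lt (rels : YBARels n R h) (z : R) {j k : ℕ} (hj : 1 ≤ j)
    (hjk : j < k) (hk : k ≤ n) : Commute (ThetaA n h z j) (ThetaA n h z k) := by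
  have hjR : inR n j := ⟨hj, by omega⟩
  have hkR : inR n k := ⟨by omega, hk⟩
  have nodup {s len : ℕ} : (List.range' s len).reverse.Nodup :=
    List.nodup_reverse.2 List.nodup_range'
  rw [ThetaA_eq_of_lt_left z hjk hk, ThetaA_eq_of_lt_right z hj hjk]
  refine commute_of_block_relations (rels.mul_apply_neg z hjR hkR hjk.ne)
    (rels.apply_neg_mul z hjR hkR hjk.ne)
    (List.semiconjBy_prod_map_mul_prod_map _ nodup (fun a _ b _ _ => ?_) fun m _ => ?conjE)
    (List.semiconjBy_prod_map_mul_prod_map _ nodup (fun a _ b _ _ => ?_) fun i _ => ?conjB)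
    (List.semiconjBy_prod_map_mul_prod_map _ nodup (fun a _ b _ _ => ?_) fun m _ => ?conjV)
    (Commute.list_prod_map fun a _ b _ => ?_) (Commute.list_prod_map fun a _ b _ => ?_)
    (Commute.list_prod_map fun a _ b _ => ?_) (Commute.list_prod_map fun a _ b _ => ?_)
    (Commute.list_prod_map fun a _ b _ => ?_) (Commute.list_prod_map fun a _ b _ => ?_)
  all_goals simp only [List.mem_reverse, List.mem_range'_1] at *
  case conjE => exact rels.semiconjBy_mul_apply_neg z hj (by omega) (by omega) hk
  case conjB =>
    simpa only [SemiconjBy, mul_assoc] using (rels.braid (-z) (by omega) (by omega) hjk hk).symm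
  case conjV => simpa only [SemiconjBy, mul_assoc] using rels.braid z hj hjk (by omega) (by omega)
  all_goals apply rels.commute <;> first | omega | exact ⟨by omega, by omega⟩

end YBA

theorem RSM_elements_commute_in_YBA_general (n : ℕ)
    (R : Type*) [CommRing R] [Algebra ℚ R] (A : Type*) [Ring A] [Algebra R A]
    (h : ℕ → ℕ → R → A) (rels : YBARels n R h) :
    ∀ (z : R) (j k : ℕ), inR n j → inR n k →
      ThetaA n h z j * ThetaA n h z k = ThetaA n h z k * ThetaA n h z j := by
  intro z j k hj hk
  rcases lt_trichotomy j k with hjk | rfl | hkj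
  · exact (ThetaA_commute_of_lt rels z hj.1 hjk hk.2).eq
  · rfl
  · exact (ThetaA_commute_of_lt rels z hk.1 hkj hj.2).eq.symm

/-- in `YB_R(A_{n-1})`, for every `z ∈ R` the elements
`Θ_1(z), …, Θ_n(z)` pairwise commute. -/
theorem RSM_elements_commute_in_YBA (n : ℕ) (hn : 2 ≤ n)
    (R : Type*) [CommRing R] [Algebra ℚ R] (A : Type*) [Ring A] [Algebra R A]
    (h : ℕ → ℕ → R → A) (rels : YBARels n R h) :
    ∀ (z : R) (j k : ℕ), inR n j → inR n k →
      ThetaA n h z j * ThetaA n h z k = ThetaA n h z k * ThetaA n h z j :=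
  RSM_elements_commute_in_YBA_general n R A h rels

end Stmt3
end

section
/- In the algebra YB_R(A_{n-1}), for every z ∈ R one has ∏_{j=1}^{n} Θ_j(z) = 1, the product taken in increasing order of j. -/
namespace Stmt4

/-- `i` is in the index range `{1, …, n}`. -/
def inR (n i : ℕ) : Prop := 1 ≤ i ∧ i ≤ n

/-- The defining relations (0)–(4) of the algebra `YB_R(A_{n-1})` for elements
`h i j x` (`1 ≤ i ≠ j ≤ n`, `x ∈ R`) of an associative `R`-algebra `A`,
where `R` is a commutative `ℚ`-algebra. -/
structure YBARels (n : ℕ) (R : Type*) [CommRing R] [Algebra ℚ R]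
    {A : Type*} [Ring A] [Algebra R A] (h : ℕ → ℕ → R → A) : Prop where
  rel0 : ∀ i j (x : R), inR n i → inR n j → i ≠ j → h i j x * h j i x = 1
  rel1 : ∀ i j (x y : R), inR n i → inR n j → i ≠ j →
      h i j x * h i j y = h i j (x + y)
  rel2 : ∀ i j k l (x y : R), inR n i → inR n j → inR n k → inR n l →
      i ≠ j → i ≠ k → i ≠ l → j ≠ k → j ≠ l → k ≠ l →
      h i j x * h k l y = h k l y * h i j x
  rel3a : ∀ i j k (x y : R), 1 ≤ i → i < j → j < k → k ≤ n →
      h i j x * h j k y + h i k (x + y) = h j k y * h i k x + h i k y * h i j x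
  rel3b : ∀ i j k (x y : R), 1 ≤ i → i < j → j < k → k ≤ n →
      h j k y * h i j x + h i k (x + y) = h i k x * h j k y + h i j x * h i k y
  rel4 : ∀ i j k (x y : R), 1 ≤ i → i < j → j < k → k ≤ n →
      h i k x * (h i j x - h i k y) * h i j y = h i j y * (h i j x - h i k y) * h i k x

/-- The multiplicative (RSM) Dunkl element
`Θ_j(z) = h_{j-1,j}(z)⁻¹ ⋯ h_{1,j}(z)⁻¹ · h_{j,n}(z) ⋯ h_{j,j+1}(z)`,
where `h_{ij}(z)⁻¹ = h_{ij}(-z)`. -/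
def ThetaA (n : ℕ) {R : Type*} [CommRing R] {A : Type*} [Ring A]
    (h : ℕ → ℕ → R → A) (z : R) (j : ℕ) : A :=
  ((List.range' 1 (j - 1)).reverse.map fun i => h i j (-z)).prod *
    ((List.range' (j + 1) (n - j)).reverse.map fun k => h j k z).prod

/-! By induction on `m`, the partial product `Θ_1(z) ⋯ Θ_m(z)` is the staircase
`∏_{i=1}^{m} h_{i,n}(z) ⋯ h_{i,m+1}(z)`. Multiplying by `Θ_{m+1}(z)`, the column
`h_{m,m+1}(z)⁻¹ ⋯ h_{1,m+1}(z)⁻¹` cancels the last factor `h_{i,m+1}(z)` of every row, because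
by relation (2) each shortened row commutes with the inverses `h_{i',m+1}(z)⁻¹`, `i' < i`, it has
to pass; the remaining factor `h_{m+1,n}(z) ⋯ h_{m+1,m+2}(z)` of `Θ_{m+1}(z)` is the new row.
At `m = n` every row is empty. -/

theorem prod_map_mul_mul_prod_map_reverse_range' {M : Type*} [Monoid M] (a b c : ℕ → M)
    (s : ℕ) : ∀ j, (∀ i, s ≤ i → i < s + j → a i * b i = 1) →
      (∀ i i', s ≤ i' → i' < i → i < s + j → Commute (c i) (b i')) →
      ((List.range' s j).map fun i => c i * a i).prod * ((List.range' s j).reverse.map b).prod =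
        ((List.range' s j).map c).prod
  | 0, _, _ => by simp
  | j + 1, hab, hcomm => by
    set P := ((List.range' s j).map fun i => c i * a i).prod
    set B := ((List.range' s j).reverse.map b).prod
    have ih : P * B = ((List.range' s j).map c).prod :=
      prod_map_mul_mul_prod_map_reverse_range' a b c s j (fun i hs hi => hab i hs (by omega))
        (fun i i' hs hi' hi => hcomm i i' hs hi' (by omega))
    have hcB : Commute (c (s + j)) B := by
      refine Commute.list_prod_right _ _ fun x hx => ?_
      obtain ⟨i', hi', rfl⟩ := List.mem_map.1 hx
      rw [List.mem_reverse, List.mem_range'_1] at hi'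
      exact hcomm _ _ hi'.1 hi'.2 (by omega)
    simp only [List.range'_1_concat, List.map_append, List.reverse_append, List.prod_append,
      List.map_cons, List.map_nil, List.reverse_cons, List.reverse_nil, List.nil_append,
      List.prod_cons, List.prod_nil, mul_one]
    calc P * (c (s + j) * a (s + j)) * (b (s + j) * B)
        = P * c (s + j) * (a (s + j) * b (s + j)) * B := by simp only [mul_assoc]
      _ = P * B * c (s + j) := by
        rw [hab _ le_self_add (by omega), mul_one, mul_assoc, hcB.eq, mul_assoc]
      _ = ((List.range' s j).map c).prod * c (s + j) := by rw [ih]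

/-- `h_{i,n}(z) ⋯ h_{i,m+1}(z)`, the factors of row `i` to the right of column `m`. -/
def rowTail {R A : Type*} (h : ℕ → ℕ → R → A) [Monoid A] (n : ℕ) (z : R) (i m : ℕ) : A :=
  ((List.range' (m + 1) (n - m)).reverse.map fun k => h i k z).prod

def staircase {R A : Type*} (h : ℕ → ℕ → R → A) [Monoid A] (n : ℕ) (z : R) (m : ℕ) : A :=
  ((List.range' 1 m).map fun i => rowTail h n z i m).prod

section Monoid

variable {R A : Type*} [Monoid A] {h : ℕ → ℕ → R → A} {n : ℕ}

theorem rowTail_eq_rowTail_succ_mul (z : R) (i : ℕ) {m : ℕ} (hm : m < n) :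
    rowTail h n z i m = rowTail h n z i (m + 1) * h i (m + 1) z := by
  obtain ⟨t, ht⟩ : ∃ t, n - m = t + 1 := ⟨n - m - 1, by omega⟩
  simp [rowTail, ht, List.range'_succ, show n - (m + 1) = t by omega]

theorem staircase_self (z : R) : staircase h n z n = 1 :=
  List.prod_eq_one fun x hx => by
    obtain ⟨i, -, rfl⟩ := List.mem_map.1 hx
    simp [rowTail]

end Monoid

theorem ThetaA_succ {R A : Type*} [CommRing R] [Ring A] {h : ℕ → ℕ → R → A} {n : ℕ} (z : R)
    (m : ℕ) :
    ThetaA n h z (m + 1) =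
      ((List.range' 1 m).reverse.map fun i => h i (m + 1) (-z)).prod *
        rowTail h n z (m + 1) (m + 1) :=
  rfl

section YBARels

variable {n : ℕ} {R : Type*} [CommRing R] [Algebra ℚ R] {A : Type*} [Ring A] [Algebra R A]
  {h : ℕ → ℕ → R → A}

theorem YBARels.apply_zero (rels : YBARels n R h) {i j : ℕ} (hi : inR n i) (hj : inR n j)
    (hij : i ≠ j) : h i j 0 = 1 := by
  have hidem : h i j 0 * h i j 0 = h i j 0 := by rw [rels.rel1 i j 0 0 hi hj hij, add_zero]
  have hinv := rels.rel0 i j 0 hi hj hij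
  calc h i j 0 = h i j 0 * h i j 0 * h j i 0 := by rw [mul_assoc, hinv, mul_one]
    _ = 1 := by rw [hidem, hinv]

theorem YBARels.mul_apply_neg (rels : YBARels n R h) {i j : ℕ} (hi : inR n i) (hj : inR n j)
    (hij : i ≠ j) (z : R) : h i j z * h i j (-z) = 1 := by
  rw [rels.rel1 i j z (-z) hi hj hij, add_neg_cancel, rels.apply_zero hi hj hij]

theorem YBARels.commute_rowTail (rels : YBARels n R h) (z w : R) {i i' m : ℕ} (hi' : 1 ≤ i')
    (hi'i : i' < i) (him : i ≤ m) :
    Commute (rowTail h n z i (m + 1)) (h i' (m + 1) w) := by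
  refine Commute.list_prod_left _ _ fun x hx => ?_
  obtain ⟨k, hk, rfl⟩ := List.mem_map.1 hx
  rw [List.mem_reverse, List.mem_range'_1] at hk
  exact rels.rel2 i k i' (m + 1) z w ⟨by omega, by omega⟩ ⟨by omega, by omega⟩
    ⟨by omega, by omega⟩ ⟨by omega, by omega⟩ (by omega) (by omega) (by omega) (by omega)
    (by omega) (by omega)

theorem YBARels.staircase_mul_ThetaA_succ (rels : YBARels n R h) (z : R) {m : ℕ} (hm : m < n) :
    staircase h n z m * ThetaA n h z (m + 1) = staircase h n z (m + 1) := by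
  have hcancel : staircase h n z m * ((List.range' 1 m).reverse.map fun i => h i (m + 1) (-z)).prod
      = ((List.range' 1 m).map fun i => rowTail h n z i (m + 1)).prod := by
    rw [staircase, List.map_congr_left fun i _ => rowTail_eq_rowTail_succ_mul z i hm]
    exact prod_map_mul_mul_prod_map_reverse_range' _ _ _ 1 m
      (fun i hi him => rels.mul_apply_neg ⟨hi, by omega⟩ ⟨by omega, hm⟩ (by omega) z)
      (fun i i' hi' hi'i him => rels.commute_rowTail z (-z) hi' hi'i (by omega))
  rw [ThetaA_succ, ← mul_assoc, hcancel, staircase, List.range'_1_concat, List.map_append,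
    List.prod_append, List.map_singleton, List.prod_singleton, add_comm 1 m]

theorem YBARels.prod_ThetaA_eq_staircase (rels : YBARels n R h) (z : R) :
    ∀ m ≤ n, ((List.range' 1 m).map fun j => ThetaA n h z j).prod = staircase h n z m
  | 0, _ => by simp [staircase]
  | m + 1, hm => by
    rw [List.range'_1_concat, List.map_append, List.prod_append, List.map_singleton,
      List.prod_singleton, rels.prod_ThetaA_eq_staircase z m (by omega), add_comm 1 m,
      rels.staircase_mul_ThetaA_succ z hm]

end YBARels

theorem prod_RSM_elements_eq_one_in_YBA_general (n : ℕ)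
    (R : Type*) [CommRing R] [Algebra ℚ R] (A : Type*) [Ring A] [Algebra R A]
    (h : ℕ → ℕ → R → A) (rels : YBARels n R h) :
    ∀ z : R, ((List.range' 1 n).map fun j => ThetaA n h z j).prod = 1 := fun z => by
  rw [rels.prod_ThetaA_eq_staircase z n le_rfl, staircase_self]

/-- in `YB_R(A_{n-1})`, for every `z ∈ R` one has
`Θ_1(z) Θ_2(z) ⋯ Θ_n(z) = 1` (the product in increasing order of `j`). -/
theorem prod_RSM_elements_eq_one_in_YBA (n : ℕ) (hn : 2 ≤ n)
    (R : Type*) [CommRing R] [Algebra ℚ R] (A : Type*) [Ring A] [Algebra R A]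
    (h : ℕ → ℕ → R → A) (rels : YBARels n R h) :
    ∀ z : R, ((List.range' 1 n).map fun j => ThetaA n h z j).prod = 1 :=
  prod_RSM_elements_eq_one_in_YBA_general n R A h rels

end Stmt4
end

section
/- Let R be a commutative ℚ-algebra and x, y ∈ R. In 𝒷ℰ(B_n) ⊗_ℚ R, the elements h_{ij} := 1 + x[i,j] (1 ≤ i ≠ j ≤ n), g_{ij} := 1 + x\overline{[i,j]} (1 ≤ i ≠ j ≤ n), and h_i := 1 + y[i] (1 ≤ i ≤ n) are units and satisfy all the defining relations of the group YB(B_n): g_{ij} = g_{ji} and h_{ij} = h_{ji}^{-1}; h_{ij}h_{kl} = h_{kl}h_{ij}, g_{ij}g_{kl} = g_{kl}g_{ij}, h_k h_{ij} = h_{ij}h_k, h_k g_{ij} = g_{ij}h_k whenever i, j, k, l are pairwise distinct; h_i h_j = h_j h_i for all i, j; h_{ij}g_{ij} = g_{ij}h_{ij} for i < j; the A_2 Yang–Baxter relations h_{ij}h_{ik}h_{jk} = h_{jk}h_{ik}h_{ij}, h_{ij}g_{ik}g_{jk} = g_{jk}g_{ik}h_{ij}, h_{ik}g_{ij}g_{jk}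 = g_{jk}g_{ij}h_{ik}, h_{jk}g_{ij}g_{ik} = g_{ik}g_{ij}h_{jk} for i < j < k; and the B_2 quantum Yang–Baxter relation h_{ij}h_i g_{ij}h_j = h_j g_{ij}h_i h_{ij} for i < j. -/
namespace Stmt14

/-- `i` is in the index range `{1, …, n}`. -/
def inR (n i : ℕ) : Prop := 1 ≤ i ∧ i ≤ n

/-- The defining relations (0)–(6) of the algebra `𝒷ℰ(B_n)` for elements
`a i j = [i,j]`, `b i j = \overline{[i,j]}` (`1 ≤ i ≠ j ≤ n`) and `c i = [i]`
(`1 ≤ i ≤ n`) of an associative unital ring `A`. -/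
structure BEBnRels (n : ℕ) {A : Type*} [Ring A]
    (a b : ℕ → ℕ → A) (c : ℕ → A) : Prop where
  r0a : ∀ i j, inR n i → inR n j → i ≠ j → a i j = -a j i
  r0b : ∀ i j, inR n i → inR n j → i ≠ j → b i j = b j i
  r1a : ∀ i j, inR n i → inR n j → i ≠ j → a i j * a i j = 0
  r1b : ∀ i j, inR n i → inR n j → i ≠ j → b i j * b i j = 0
  r1c : ∀ i, inR n i → c i * c i = 0
  r2aa : ∀ i j k l, inR n i → inR n j → inR n k → inR n l →
      i ≠ j → k ≠ l → i ≠ k → i ≠ l → j ≠ k → j ≠ l →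
      a i j * a k l = a k l * a i j
  r2ba : ∀ i j k l, inR n i → inR n j → inR n k → inR n l →
      i ≠ j → k ≠ l → i ≠ k → i ≠ l → j ≠ k → j ≠ l →
      b i j * a k l = a k l * b i j
  r2bb : ∀ i j k l, inR n i → inR n j → inR n k → inR n l →
      i ≠ j → k ≠ l → i ≠ k → i ≠ l → j ≠ k → j ≠ l →
      b i j * b k l = b k l * b i j
  r3cc : ∀ i j, inR n i → inR n j → c i * c j = c j * c i
  r3ab : ∀ i j, inR n i → inR n j → i ≠ j → a i j * b i j = b i j * a i j
  r3ac : ∀ i j k, inR n i → inR n j → inR n k → i ≠ j → k ≠ i → k ≠ j →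
      a i j * c k = c k * a i j
  r3bc : ∀ i j k, inR n i → inR n j → inR n k → i ≠ j → k ≠ i → k ≠ j →
      b i j * c k = c k * b i j
  r4a : ∀ i j k, inR n i → inR n j → inR n k → i ≠ j → j ≠ k → i ≠ k →
      a i j * a j k + a j k * a k i + a k i * a i j = 0
  r4b : ∀ i j k, inR n i → inR n j → inR n k → i ≠ j → j ≠ k → i ≠ k →
      b i k * a i j + a j i * b j k + b k j * b i k = 0
  r4c : ∀ i j, inR n i → inR n j → i ≠ j →
      a i j * c i + c j * a j i + c i * b i j + b i j * c j = 0
  r5 : ∀ i j, 1 ≤ i → i < j → j ≤ n →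
      a i j * c i * b i j * c i + b i j * c i * a i j * c i +
        c i * a i j * c i * b i j + c i * b i j * c i * a i j = 0
  r6 : ∀ i j, 1 ≤ i → i < j → j ≤ n →
      a i j * c i * b i j * c j = c j * b i j * c i * a i j

section aux
variable {A : Type*} [Ring A]

lemma expand2 (u v : A) : (1+u)*(1+v) = 1+u+v+u*v := by noncomm_ring

lemma mulcomm_one_add {u v : A} (h : u*v = v*u) : (1+u)*(1+v) = (1+v)*(1+u) := by
  rw [expand2, expand2, h]; abel

lemma unit_of_sq {u : A} (h : u*u = 0) : IsUnit (1+u) := by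
  refine ⟨⟨1+u, 1-u, ?_, ?_⟩, rfl⟩
  · have e : (1+u)*(1-u) = 1 - u*u := by noncomm_ring
    rw [e, h, sub_zero]
  · have e : (1-u)*(1+u) = 1 - u*u := by noncomm_ring
    rw [e, h, sub_zero]

lemma inv_pair {u : A} (h : u*u = 0) : (1+u)*(1+(-u)) = 1 := by
  have e : (1+u)*(1+(-u)) = 1 - u*u := by noncomm_ring
  rw [e, h, sub_zero]

lemma expand3 (u v w : A) :
    (1+u)*(1+v)*(1+w) = 1+u+v+w+(u*v+u*w+v*w)+u*v*w := by noncomm_ring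

lemma A2ring {u v w : A} (hu : u*u = 0)
    (h1 : u*w = v*u + w*v) (h2 : w*u = u*v + v*w) :
    (1+u)*(1+v)*(1+w) = (1+w)*(1+v)*(1+u) := by
  have hvw : v*w = w*u - u*v := by rw [h2]; noncomm_ring
  have hwv : w*v = u*w - v*u := by rw [h1]; noncomm_ring
  have h3 : u*v*w = u*w*u := by
    calc u*v*w = u*(w*u) - u*(u*v) := by rw [mul_assoc, hvw]; noncomm_ring
    _ = u*w*u - u*u*v := by noncomm_ring
    _ = u*w*u := by rw [hu]; noncomm_ring
  have h4 : w*v*u = u*w*u := by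
    calc w*v*u = (u*w)*u - (v*u)*u := by rw [hwv]; noncomm_ring
    _ = u*w*u - v*(u*u) := by noncomm_ring
    _ = u*w*u := by rw [hu]; noncomm_ring
  rw [expand3, expand3, h1, h2, h3, h4]
  noncomm_ring

lemma expand4 (u v w z : A) :
    (1+u)*(1+v)*(1+w)*(1+z) = 1+u+v+w+z
      +(u*v+u*w+u*z+v*w+v*z+w*z)
      +(u*v*w+u*v*z+u*w*z+v*w*z)+u*v*w*z := by noncomm_ring

lemma B2ring {a p b q : A} (hab : a*b = b*a) (hpq : p*q = q*p)
    (hb : b*b = 0) (hp : p*p = 0)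
    (h1 : a*p + p*b + b*q = q*a) (h2 : a*q = p*a + q*b + b*p)
    (h6 : a*p*b*q = q*b*p*a) :
    (1+a)*(1+p)*(1+b)*(1+q) = (1+q)*(1+b)*(1+p)*(1+a) := by
  have h1' : a*p = q*a - p*b - b*q := by rw [← h1]; noncomm_ring
  have t1 : a*b*q = b*p*a + b*q*b := by
    calc a*b*q = b*(a*q) := by rw [hab]; noncomm_ring
    _ = b*(p*a + q*b + b*p) := by rw [h2]
    _ = b*p*a + b*q*b + b*b*p := by noncomm_ring
    _ = b*p*a + b*q*b := by rw [hb]; noncomm_ring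
  have t2 : a*p*b = q*b*a - b*q*b := by
    calc a*p*b = (q*a - p*b - b*q)*b := by rw [h1']
    _ = q*(a*b) - p*(b*b) - b*q*b := by noncomm_ring
    _ = q*(b*a) - b*q*b := by rw [hab, hb]; noncomm_ring
    _ = q*b*a - b*q*b := by noncomm_ring
  have t3 : a*p*q = p*a*p + q*b*p := by
    calc a*p*q = (a*q)*p := by rw [mul_assoc, hpq, ← mul_assoc]
    _ = (p*a + q*b + b*p)*p := by rw [h2]
    _ = p*a*p + q*b*p + b*(p*p) := by noncomm_ring
    _ = p*a*p + q*b*p := by rw [hp]; noncomm_ring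
  have t4 : q*p*a = p*a*p + p*b*q := by
    calc q*p*a = p*(q*a) := by rw [← hpq]; noncomm_ring
    _ = p*(a*p + p*b + b*q) := by rw [← h1]
    _ = p*a*p + p*p*b + p*b*q := by noncomm_ring
    _ = p*a*p + p*b*q := by rw [hp]; noncomm_ring
  have k2 : a*p+a*b+a*q+p*b+p*q+b*q = q*b+q*p+q*a+b*p+b*a+p*a := by
    rw [hab, hpq, h2, ← h1]; abel
  have k3 : a*p*b + a*p*q + a*b*q + p*b*q = q*b*p + q*b*a + q*p*a + b*p*a := by
    rw [t1, t2, t3, t4]; noncomm_ring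
  rw [expand4, expand4, k2, k3, h6]; abel

variable {R : Type*} [CommRing R] [Algebra R A]

lemma smulmul (x y : R) (u v : A) : (x•u)*(y•v) = (x*y)•(u*v) := by
  rw [smul_mul_assoc, mul_smul_comm, smul_smul]

end aux

/-- in `𝒷ℰ(B_n) ⊗ R` the elements `h_{ij} = 1 + x[i,j]`,
`g_{ij} = 1 + x\overline{[i,j]}`, `h_i = 1 + y[i]` are units and satisfy all the
defining relations of the group `YB(B_n)`. -/
theorem one_add_generators_satisfy_YB_Bn_relations (n : ℕ) (hn : 2 ≤ n)
    (R : Type*) [CommRing R] [Algebra ℚ R] (A : Type*) [Ring A] [Algebra R A]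
    (a b : ℕ → ℕ → A) (c : ℕ → A) (rels : BEBnRels n a b c) (x y : R) :
    (∀ i j, inR n i → inR n j → i ≠ j →
      IsUnit (1 + x • a i j) ∧ IsUnit (1 + x • b i j)) ∧
    (∀ i, inR n i → IsUnit (1 + y • c i)) ∧
    (∀ i j, inR n i → inR n j → i ≠ j → (1 + x • b i j) = (1 + x • b j i)) ∧
    (∀ i j, inR n i → inR n j → i ≠ j → (1 + x • a i j) * (1 + x • a j i) = 1) ∧
    (∀ i j k l, inR n i → inR n j → inR n k → inR n l →
      i ≠ j → i ≠ k → i ≠ l → j ≠ k → j ≠ l → k ≠ l →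
      (1 + x • a i j) * (1 + x • a k l) = (1 + x • a k l) * (1 + x • a i j)) ∧
    (∀ i j k l, inR n i → inR n j → inR n k → inR n l →
      i ≠ j → i ≠ k → i ≠ l → j ≠ k → j ≠ l → k ≠ l →
      (1 + x • b i j) * (1 + x • b k l) = (1 + x • b k l) * (1 + x • b i j)) ∧
    (∀ i j k, inR n i → inR n j → inR n k → i ≠ j → k ≠ i → k ≠ j →
      (1 + y • c k) * (1 + x • a i j) = (1 + x • a i j) * (1 + y • c k)) ∧
    (∀ i j k, inR n i → inR n j → inR n k → i ≠ j → k ≠ i → k ≠ j →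
      (1 + y • c k) * (1 + x • b i j) = (1 + x • b i j) * (1 + y • c k)) ∧
    (∀ i j, inR n i → inR n j →
      (1 + y • c i) * (1 + y • c j) = (1 + y • c j) * (1 + y • c i)) ∧
    (∀ i j, inR n i → inR n j → i < j →
      (1 + x • a i j) * (1 + x • b i j) = (1 + x • b i j) * (1 + x • a i j)) ∧
    (∀ i j k, 1 ≤ i → i < j → j < k → k ≤ n →
      (1 + x • a i j) * (1 + x • a i k) * (1 + x • a j k) =
        (1 + x • a j k) * (1 + x • a i k) * (1 + x • a i j)) ∧
    (∀ i j k, 1 ≤ i → i < j → j < k → k ≤ n →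
      (1 + x • a i j) * (1 + x • b i k) * (1 + x • b j k) =
        (1 + x • b j k) * (1 + x • b i k) * (1 + x • a i j)) ∧
    (∀ i j k, 1 ≤ i → i < j → j < k → k ≤ n →
      (1 + x • a i k) * (1 + x • b i j) * (1 + x • b j k) =
        (1 + x • b j k) * (1 + x • b i j) * (1 + x • a i k)) ∧
    (∀ i j k, 1 ≤ i → i < j → j < k → k ≤ n →
      (1 + x • a j k) * (1 + x • b i j) * (1 + x • b i k) =
        (1 + x • b i k) * (1 + x • b i j) * (1 + x • a j k)) ∧
    (∀ i j, 1 ≤ i → i < j → j ≤ n →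
      (1 + x • a i j) * (1 + y • c i) * (1 + x • b i j) * (1 + y • c j) =
        (1 + y • c j) * (1 + x • b i j) * (1 + y • c i) * (1 + x • a i j)) := by
  refine ⟨?_, ?_, ?_, ?_, ?_, ?_, ?_, ?_, ?_, ?_, ?_, ?_, ?_, ?_, ?_⟩
  · -- units a, b
    intro i j hi hj hij
    exact ⟨unit_of_sq (by rw [smulmul, rels.r1a i j hi hj hij, smul_zero]),
      unit_of_sq (by rw [smulmul, rels.r1b i j hi hj hij, smul_zero])⟩
  · -- units c
    intro i hi
    exact unit_of_sq (by rw [smulmul, rels.r1c i hi, smul_zero])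
  · -- b symmetric
    intro i j hi hj hij
    rw [rels.r0b i j hi hj hij]
  · -- h inverse
    intro i j hi hj hij
    rw [rels.r0a j i hj hi hij.symm, smul_neg]
    exact inv_pair (by rw [smulmul, rels.r1a i j hi hj hij, smul_zero])
  · -- a-a commute
    intro i j k l hi hj hk hl hij hik hil hjk hjl hkl
    exact mulcomm_one_add
      (by rw [smulmul, smulmul, rels.r2aa i j k l hi hj hk hl hij hkl hik hil hjk hjl])
  · -- b-b commute
    intro i j k l hi hj hk hl hij hik hil hjk hjl hkl
    exact mulcomm_one_add
      (by rw [smulmul, smulmul, rels.r2bb i j k l hi hj hk hl hij hkl hik hil hjk hjl])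
  · -- c-a commute
    intro i j k hi hj hk hij hki hkj
    exact mulcomm_one_add
      (by rw [smulmul, smulmul, rels.r3ac i j k hi hj hk hij hki hkj, mul_comm y x])
  · -- c-b commute
    intro i j k hi hj hk hij hki hkj
    exact mulcomm_one_add
      (by rw [smulmul, smulmul, rels.r3bc i j k hi hj hk hij hki hkj, mul_comm y x])
  · -- c-c commute
    intro i j hi hj
    exact mulcomm_one_add (by rw [smulmul, smulmul, rels.r3cc i j hi hj])
  · -- a-b commute
    intro i j hi hj hij
    exact mulcomm_one_add (by rw [smulmul, smulmul, rels.r3ab i j hi hj (Nat.ne_of_lt hij)])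
  · -- A2 (a,a,a)
    intro i j k h1i hij hjk hkn
    have hi : inR n i := ⟨h1i, le_trans (Nat.le_of_lt (Nat.lt_trans hij hjk)) hkn⟩
    have hj : inR n j := ⟨le_trans h1i (Nat.le_of_lt hij), le_trans (Nat.le_of_lt hjk) hkn⟩
    have hk : inR n k := ⟨le_trans h1i (Nat.le_of_lt (Nat.lt_trans hij hjk)), hkn⟩
    have hij' : i ≠ j := Nat.ne_of_lt hij
    have hjk' : j ≠ k := Nat.ne_of_lt hjk
    have hik' : i ≠ k := Nat.ne_of_lt (Nat.lt_trans hij hjk)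
    have e := rels.r4a i j k hi hj hk hij' hjk' hik'
    rw [rels.r0a k i hk hi hik'.symm] at e
    have e1 : a i j * a j k = a i k * a i j + a j k * a i k := sub_eq_zero.mp (by
      calc a i j * a j k - (a i k * a i j + a j k * a i k)
          = a i j * a j k + a j k * -a i k + -a i k * a i j := by noncomm_ring
        _ = 0 := e)
    have e' := rels.r4a i k j hi hk hj hik' (Ne.symm hjk') hij'
    rw [rels.r0a k j hk hj (Ne.symm hjk'), rels.r0a j i hj hi (Ne.symm hij')] at e'
    have e2 : a j k * a i j = a i j * a i k + a i k * a j k := sub_eq_zero.mp (by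
      calc a j k * a i j - (a i j * a i k + a i k * a j k)
          = a i k * -a j k + -a j k * -a i j + -a i j * a i k := by noncomm_ring
        _ = 0 := e')
    exact A2ring (by rw [smulmul, rels.r1a i j hi hj hij', smul_zero])
      (by rw [smulmul, smulmul, smulmul, ← smul_add, e1])
      (by rw [smulmul, smulmul, smulmul, ← smul_add, e2])
  · -- A2 (a ij, b ik, b jk)
    intro i j k h1i hij hjk hkn
    have hi : inR n i := ⟨h1i, le_trans (Nat.le_of_lt (Nat.lt_trans hij hjk)) hkn⟩
    have hj : inR n j := ⟨le_trans h1i (Nat.le_of_lt hij), le_trans (Nat.le_of_lt hjk) hkn⟩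
    have hk : inR n k := ⟨le_trans h1i (Nat.le_of_lt (Nat.lt_trans hij hjk)), hkn⟩
    have hij' : i ≠ j := Nat.ne_of_lt hij
    have hjk' : j ≠ k := Nat.ne_of_lt hjk
    have hik' : i ≠ k := Nat.ne_of_lt (Nat.lt_trans hij hjk)
    have e := rels.r4b i j k hi hj hk hij' hjk' hik'
    rw [rels.r0a j i hj hi (Ne.symm hij'), rels.r0b k j hk hj (Ne.symm hjk')] at e
    have e1 : a i j * b j k = b i k * a i j + b j k * b i k := sub_eq_zero.mp (by
      calc a i j * b j k - (b i k * a i j + b j k * b i k)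
          = -(b i k * a i j + -a i j * b j k + b j k * b i k) := by noncomm_ring
        _ = 0 := by rw [e, neg_zero])
    have e' := rels.r4b j i k hj hi hk (Ne.symm hij') hik' hjk'
    rw [rels.r0a j i hj hi (Ne.symm hij'), rels.r0b k i hk hi (Ne.symm hik')] at e'
    have e2 : b j k * a i j = a i j * b i k + b i k * b j k := sub_eq_zero.mp (by
      calc b j k * a i j - (a i j * b i k + b i k * b j k)
          = -(b j k * -a i j + a i j * b i k + b i k * b j k) := by noncomm_ring
        _ = 0 := by rw [e', neg_zero])
    exact A2ring (by rw [smulmul, rels.r1a i j hi hj hij', smul_zero])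
      (by rw [smulmul, smulmul, smulmul, ← smul_add, e1])
      (by rw [smulmul, smulmul, smulmul, ← smul_add, e2])
  · -- A2 (a ik, b ij, b jk)
    intro i j k h1i hij hjk hkn
    have hi : inR n i := ⟨h1i, le_trans (Nat.le_of_lt (Nat.lt_trans hij hjk)) hkn⟩
    have hj : inR n j := ⟨le_trans h1i (Nat.le_of_lt hij), le_trans (Nat.le_of_lt hjk) hkn⟩
    have hk : inR n k := ⟨le_trans h1i (Nat.le_of_lt (Nat.lt_trans hij hjk)), hkn⟩
    have hij' : i ≠ j := Nat.ne_of_lt hij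
    have hjk' : j ≠ k := Nat.ne_of_lt hjk
    have hik' : i ≠ k := Nat.ne_of_lt (Nat.lt_trans hij hjk)
    have e := rels.r4b i k j hi hk hj hik' (Ne.symm hjk') hij'
    rw [rels.r0a k i hk hi (Ne.symm hik'), rels.r0b k j hk hj (Ne.symm hjk')] at e
    have e1 : a i k * b j k = b i j * a i k + b j k * b i j := sub_eq_zero.mp (by
      calc a i k * b j k - (b i j * a i k + b j k * b i j)
          = -(b i j * a i k + -a i k * b j k + b j k * b i j) := by noncomm_ring
        _ = 0 := by rw [e, neg_zero])
    have e' := rels.r4b k i j hk hi hj (Ne.symm hik') hij' (Ne.symm hjk')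
    rw [rels.r0a k i hk hi (Ne.symm hik'), rels.r0b k j hk hj (Ne.symm hjk'),
      rels.r0b j i hj hi (Ne.symm hij')] at e'
    have e2 : b j k * a i k = a i k * b i j + b i j * b j k := sub_eq_zero.mp (by
      calc b j k * a i k - (a i k * b i j + b i j * b j k)
          = -(b j k * -a i k + a i k * b i j + b i j * b j k) := by noncomm_ring
        _ = 0 := by rw [e', neg_zero])
    exact A2ring (by rw [smulmul, rels.r1a i k hi hk hik', smul_zero])
      (by rw [smulmul, smulmul, smulmul, ← smul_add, e1])
      (by rw [smulmul, smulmul, smulmul, ← smul_add, e2])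
  · -- A2 (a jk, b ij, b ik)
    intro i j k h1i hij hjk hkn
    have hi : inR n i := ⟨h1i, le_trans (Nat.le_of_lt (Nat.lt_trans hij hjk)) hkn⟩
    have hj : inR n j := ⟨le_trans h1i (Nat.le_of_lt hij), le_trans (Nat.le_of_lt hjk) hkn⟩
    have hk : inR n k := ⟨le_trans h1i (Nat.le_of_lt (Nat.lt_trans hij hjk)), hkn⟩
    have hij' : i ≠ j := Nat.ne_of_lt hij
    have hjk' : j ≠ k := Nat.ne_of_lt hjk
    have hik' : i ≠ k := Nat.ne_of_lt (Nat.lt_trans hij hjk)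
    have e := rels.r4b j k i hj hk hi hjk' (Ne.symm hik') (Ne.symm hij')
    rw [rels.r0b j i hj hi (Ne.symm hij'), rels.r0a k j hk hj (Ne.symm hjk'),
      rels.r0b k i hk hi (Ne.symm hik')] at e
    have e1 : a j k * b i k = b i j * a j k + b i k * b i j := sub_eq_zero.mp (by
      calc a j k * b i k - (b i j * a j k + b i k * b i j)
          = -(b i j * a j k + -a j k * b i k + b i k * b i j) := by noncomm_ring
        _ = 0 := by rw [e, neg_zero])
    have e' := rels.r4b k j i hk hj hi (Ne.symm hjk') (Ne.symm hij') (Ne.symm hik')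
    rw [rels.r0b k i hk hi (Ne.symm hik'), rels.r0a k j hk hj (Ne.symm hjk'),
      rels.r0b j i hj hi (Ne.symm hij')] at e'
    have e2 : b i k * a j k = a j k * b i j + b i j * b i k := sub_eq_zero.mp (by
      calc b i k * a j k - (a j k * b i j + b i j * b i k)
          = -(b i k * -a j k + a j k * b i j + b i j * b i k) := by noncomm_ring
        _ = 0 := by rw [e', neg_zero])
    exact A2ring (by rw [smulmul, rels.r1a j k hj hk hjk', smul_zero])
      (by rw [smulmul, smulmul, smulmul, ← smul_add, e1])
      (by rw [smulmul, smulmul, smulmul, ← smul_add, e2])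
  · -- B2
    intro i j h1i hij hjn
    have hi : inR n i := ⟨h1i, le_trans (Nat.le_of_lt hij) hjn⟩
    have hj : inR n j := ⟨le_trans h1i (Nat.le_of_lt hij), hjn⟩
    have hij' : i ≠ j := Nat.ne_of_lt hij
    have e := rels.r4c i j hi hj hij'
    rw [rels.r0a j i hj hi (Ne.symm hij')] at e
    have e1 : a i j * c i + c i * b i j + b i j * c j = c j * a i j := sub_eq_zero.mp (by
      calc a i j * c i + c i * b i j + b i j * c j - c j * a i j
          = a i j * c i + c j * -a i j + c i * b i j + b i j * c j := by noncomm_ring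
        _ = 0 := e)
    have e' := rels.r4c j i hj hi (Ne.symm hij')
    rw [rels.r0a j i hj hi (Ne.symm hij'), rels.r0b j i hj hi (Ne.symm hij')] at e'
    have e2 : a i j * c j = c i * a i j + c j * b i j + b i j * c i := sub_eq_zero.mp (by
      calc a i j * c j - (c i * a i j + c j * b i j + b i j * c i)
          = -(-a i j * c j + c i * a i j + c j * b i j + b i j * c i) := by noncomm_ring
        _ = 0 := by rw [e', neg_zero])
    have e6 := rels.r6 i j h1i hij hjn
    refine B2ring ?_ ?_ ?_ ?_ ?_ ?_ ?_
    · rw [smulmul, smulmul, rels.r3ab i j hi hj hij']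
    · rw [smulmul, smulmul, rels.r3cc i j hi hj]
    · rw [smulmul, rels.r1b i j hi hj hij', smul_zero]
    · rw [smulmul, rels.r1c i hi, smul_zero]
    · simp only [smulmul]
      rw [mul_comm y x, ← smul_add, ← smul_add, e1]
    · simp only [smulmul]
      rw [mul_comm y x, ← smul_add, ← smul_add, e2]
    · simp only [smulmul]
      rw [show a i j * c i * b i j * c j = c j * b i j * c i * a i j from e6]
      congr 1
      ring

end Stmt14
end

section
/- Let R be a commutative ℚ-algebra and x, y ∈ R. In 𝒷ℰ(B_n) ⊗_ℚ R, the RSM-elements Θ_1^{B_n}(x,y), …, Θ_n^{B_n}(x,y) pairwise commute: Θ_i^{B_n}(x,y) Θ_j^{B_n}(x,y) = Θ_j^{B_n}(x,y) Θ_i^{B_n}(x,y) for all 1 ≤ i, j ≤ n. -/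
/-!
Put `h_{ij} = 1 + x[i,j]`, `g_{ij} = 1 + x\overline{[i,j]}` and `h_i = 1 + y[i]`. As the
generators square to zero, the relations of `𝒷ℰ(B_n)` become multiplicative ones:
`h_{ij} h_{ji} = 1`, elements with disjoint indices commute, the Yang–Baxter equations
`h_{ij} h_{ik} h_{jk} = h_{jk} h_{ik} h_{ij}` and `h_{ij} g_{ik} g_{jk} = g_{jk} g_{ik} h_{ij}`,
and for `i < j` the reflection equation `h_{ij} h_i g_{ij} h_j = h_j g_{ij} h_i h_{ij}`.

Let `i < j`. By Yang–Baxter, the `h_{j•}`-factors of `Θ_j` can be pushed through the `g`-string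
of `Θ_i`, which moves `g_{ji}` to an end of that string, and symmetrically. This brings the two
products to the shapes `P · C · Q` and `P h_{ji} · C' · h_{ij} Q`, where `C'` is `C` with `i` and
`j` exchanged. The reflection equation, applied on both sides of the middle `g`-strings (which
`h_{ij}` swaps by Yang–Baxter), gives `h_{ij} C = C' h_{ij}`.
-/

namespace Stmt15

/-- `i` is in the index range `{1, …, n}`. -/
def inR (n i : ℕ) : Prop := 1 ≤ i ∧ i ≤ n

/-- The defining relations (0)–(6) of the algebra `𝒷ℰ(B_n)` for elements
`a i j = [i,j]`, `b i j = \overline{[i,j]}` (`1 ≤ i ≠ j ≤ n`) and `c i = [i]`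
(`1 ≤ i ≤ n`) of an associative unital ring `A`. -/
structure BEBnRels (n : ℕ) {A : Type*} [Ring A]
    (a b : ℕ → ℕ → A) (c : ℕ → A) : Prop where
  r0a : ∀ i j, inR n i → inR n j → i ≠ j → a i j = -a j i
  r0b : ∀ i j, inR n i → inR n j → i ≠ j → b i j = b j i
  r1a : ∀ i j, inR n i → inR n j → i ≠ j → a i j * a i j = 0
  r1b : ∀ i j, inR n i → inR n j → i ≠ j → b i j * b i j = 0
  r1c : ∀ i, inR n i → c i * c i = 0
  r2aa : ∀ i j k l, inR n i → inR n j → inR n k → inR n l →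
      i ≠ j → k ≠ l → i ≠ k → i ≠ l → j ≠ k → j ≠ l →
      a i j * a k l = a k l * a i j
  r2ba : ∀ i j k l, inR n i → inR n j → inR n k → inR n l →
      i ≠ j → k ≠ l → i ≠ k → i ≠ l → j ≠ k → j ≠ l →
      b i j * a k l = a k l * b i j
  r2bb : ∀ i j k l, inR n i → inR n j → inR n k → inR n l →
      i ≠ j → k ≠ l → i ≠ k → i ≠ l → j ≠ k → j ≠ l →
      b i j * b k l = b k l * b i j
  r3cc : ∀ i j, inR n i → inR n j → c i * c j = c j * c i
  r3ab : ∀ i j, inR n i → inR n j → i ≠ j → a i j * b i j = b i j * a i j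
  r3ac : ∀ i j k, inR n i → inR n j → inR n k → i ≠ j → k ≠ i → k ≠ j →
      a i j * c k = c k * a i j
  r3bc : ∀ i j k, inR n i → inR n j → inR n k → i ≠ j → k ≠ i → k ≠ j →
      b i j * c k = c k * b i j
  r4a : ∀ i j k, inR n i → inR n j → inR n k → i ≠ j → j ≠ k → i ≠ k →
      a i j * a j k + a j k * a k i + a k i * a i j = 0
  r4b : ∀ i j k, inR n i → inR n j → inR n k → i ≠ j → j ≠ k → i ≠ k →
      b i k * a i j + a j i * b j k + b k j * b i k = 0
  r4c : ∀ i j, inR n i → inR n j → i ≠ j →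
      a i j * c i + c j * a j i + c i * b i j + b i j * c j = 0
  r5 : ∀ i j, 1 ≤ i → i < j → j ≤ n →
      a i j * c i * b i j * c i + b i j * c i * a i j * c i +
        c i * a i j * c i * b i j + c i * b i j * c i * a i j = 0
  r6 : ∀ i j, 1 ≤ i → i < j → j ≤ n →
      a i j * c i * b i j * c j = c j * b i j * c i * a i j

/-- The RSM-element `Θ_j^{B_n}(x,y)` in `𝒷ℰ(B_n) ⊗ R`:
`Θ_j = (h_{j-1,j}⁻¹ ⋯ h_{1,j}⁻¹) · h_j · (∏_{i ≠ j} g_{ij}, increasing i) · h_j ·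
(h_{j,n} ⋯ h_{j,j+1})`, where `h_{ij} = 1 + x•[i,j]`, `g_{ij} = 1 + x•\overline{[i,j]}`,
`h_j = 1 + y•[j]`, and `h_{ij}⁻¹ = h_{ji} = 1 + x•[j,i]`. -/
def ThetaB (n : ℕ) {R A : Type*} [CommRing R] [Ring A] [Algebra R A]
    (a b : ℕ → ℕ → A) (c : ℕ → A) (x y : R) (j : ℕ) : A :=
  ((List.range' 1 (j - 1)).reverse.map fun i => 1 + x • a j i).prod *
    (1 + y • c j) *
    (((List.range' 1 n).filter fun i => decide (i ≠ j)).map fun i => 1 + x • b i j).prod *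
    (1 + y • c j) *
    ((List.range' (j + 1) (n - j)).reverse.map fun k => 1 + x • a j k).prod

theorem List.Ico_eq_append_cons {a m b : ℕ} (ham : a ≤ m) (hmb : m < b) :
    List.Ico a b = List.Ico a m ++ m :: List.Ico (m + 1) b := by
  rw [← List.Ico.append_consecutive ham hmb.le, List.Ico.eq_cons hmb]

theorem List.nodup_Ico_append_Ico {a b c d : ℕ} (h : b ≤ c) :
    (List.Ico a b ++ List.Ico c d).Nodup :=
  List.nodup_append.2 ⟨List.Ico.nodup a b, List.Ico.nodup c d, fun x hx y hy => by
    rw [List.Ico.mem] at hx hy; omega⟩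

theorem List.filter_ne_Ico {j n : ℕ} (hj : inR n j) :
    (List.Ico 1 (n + 1)).filter (fun i => decide (i ≠ j)) =
      List.Ico 1 j ++ List.Ico (j + 1) (n + 1) := by
  rw [List.Ico_eq_append_cons hj.1 (Nat.lt_succ_of_le hj.2), List.filter_append,
    List.filter_cons_of_neg (by simp), List.filter_eq_self.2, List.filter_eq_self.2] <;>
  · intro k hk
    rw [List.Ico.mem] at hk
    simp only [ne_eq, decide_eq_true_eq]
    omega

section ListProd

variable {M : Type*} [Monoid M]

theorem semiconjBy_prod_map_mul_prod_map {z : M} {f g : ℕ → M} {l : List ℕ} (hl : l.Nodup)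
    (hfg : ∀ k ∈ l, ∀ k' ∈ l, k ≠ k' → Commute (f k) (g k'))
    (hz : ∀ k ∈ l, SemiconjBy z (f k * g k) (g k * f k)) :
    SemiconjBy z ((l.map f).prod * (l.map g).prod) ((l.map g).prod * (l.map f).prod) := by
  induction l with
  | nil => simp
  | cons m t ih =>
    obtain ⟨hm, ht⟩ := List.nodup_cons.1 hl
    have hne : ∀ k ∈ t, m ≠ k := fun k hk e => hm (e ▸ hk)
    have hgm : Commute (g m) (t.map f).prod := Commute.list_prod_right _ _ <| by
      simpa using fun k hk => (hfg k (by simp [hk]) m (by simp) (hne k hk).symm).symm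
    have hfm : Commute (f m) (t.map g).prod := Commute.list_prod_right _ _ <| by
      simpa using fun k hk => hfg m (by simp) k (by simp [hk]) (hne k hk)
    have key := (hz m (by simp)).mul_right
      (ih ht (fun k hk k' hk' => hfg k (by simp [hk]) k' (by simp [hk']))
        (fun k hk => hz k (by simp [hk])))
    simpa only [List.map_cons, List.prod_cons, mul_assoc, hgm.left_comm, hfm.left_comm] using key

theorem semiconjBy_prod_map_reverse {w : M} {h g : ℕ → M} {l : List ℕ} (hl : l.Nodup)
    (hhg : ∀ k ∈ l, ∀ k' ∈ l, k ≠ k' → Commute (h k) (g k'))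
    (hw : ∀ k ∈ l, SemiconjBy (h k) (w * g k) (g k * w)) :
    SemiconjBy (l.reverse.map h).prod (w * (l.map g).prod) ((l.map g).prod * w) := by
  induction l with
  | nil => simp
  | cons m t ih =>
    obtain ⟨hm, ht⟩ := List.nodup_cons.1 hl
    have hne : ∀ k ∈ t, m ≠ k := fun k hk e => hm (e ▸ hk)
    have hmt : Commute (h m) (t.map g).prod := Commute.list_prod_right _ _ <| by
      simpa using fun k hk => hhg m (by simp) k (by simp [hk]) (hne k hk)
    have htm : Commute (t.reverse.map h).prod (g m) := Commute.list_prod_left _ _ <| by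
      simpa using fun k hk => hhg k (by simp [hk]) m (by simp) (hne k hk).symm
    have ih' := ih ht (fun k hk k' hk' => hhg k (by simp [hk]) k' (by simp [hk']))
      (fun k hk => hw k (by simp [hk]))
    have hm' : SemiconjBy (h m) (w * (g m * (t.map g).prod)) (g m * (w * (t.map g).prod)) := by
      simpa only [mul_assoc] using (hw m (by simp)).mul_right hmt
    have key := (SemiconjBy.mul_right htm ih').mul_left hm'
    simpa only [List.reverse_cons, List.map_append, List.map_cons, List.map_nil, List.prod_append,
      List.prod_cons, List.prod_nil, mul_one, mul_assoc] using key

end ListProd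

section Products

variable {M : Type*} [Monoid M] (H G : ℕ → ℕ → M) (E : ℕ → M)

def hProd (p : ℕ) (l : List ℕ) : M := (l.reverse.map (H p)).prod

def gProd (q : ℕ) (l : List ℕ) : M := (l.map (G · q)).prod

@[simp]
theorem gProd_nil (q : ℕ) : gProd G q [] = 1 := rfl

@[simp]
theorem hProd_append (p : ℕ) (l l' : List ℕ) :
    hProd H p (l ++ l') = hProd H p l' * hProd H p l := by
  simp [hProd]

@[simp]
theorem hProd_cons (p k : ℕ) (l : List ℕ) : hProd H p (k :: l) = hProd H p l * H p k := by
  simp [hProd]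

@[simp]
theorem gProd_append (q : ℕ) (l l' : List ℕ) :
    gProd G q (l ++ l') = gProd G q l * gProd G q l' := by
  simp [gProd]

@[simp]
theorem gProd_cons (q k : ℕ) (l : List ℕ) : gProd G q (k :: l) = G k q * gProd G q l := by
  simp [gProd]

variable {H G}

theorem commute_hProd_left {p : ℕ} {l : List ℕ} {z : M} (h : ∀ k ∈ l, Commute (H p k) z) :
    Commute (hProd H p l) z :=
  Commute.list_prod_left _ _ <| by simpa using h

theorem commute_gProd_left {q : ℕ} {l : List ℕ} {z : M} (h : ∀ k ∈ l, Commute (G k q) z) :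
    Commute (gProd G q l) z :=
  Commute.list_prod_left _ _ <| by simpa using h

end Products

def DistinctIndices (n : ℕ) (l : List ℕ) : Prop := l.Nodup ∧ ∀ k ∈ l, inR n k

/-- The relations of the header for `h_{ij} = H i j`, `g_{ij} = G i j`, `h_i = E i`, with indices
in `{1, …, n}`. -/
structure ReflectionSystem (n : ℕ) {M : Type*} [Monoid M] (H G : ℕ → ℕ → M) (E : ℕ → M) :
    Prop where
  mul_swap : ∀ i j, DistinctIndices n [i, j] → H i j * H j i = 1
  G_symm : ∀ i j, DistinctIndices n [i, j] → G i j = G j i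
  yangBaxter : ∀ i j k, DistinctIndices n [i, j, k] →
    SemiconjBy (H i j) (H i k * H j k) (H j k * H i k)
  yangBaxter_G : ∀ i j k, DistinctIndices n [i, j, k] →
    SemiconjBy (H i j) (G i k * G j k) (G j k * G i k)
  reflection : ∀ i j, 1 ≤ i → i < j → j ≤ n →
    SemiconjBy (H i j) (E i * G i j * E j) (E j * G i j * E i)
  commute_H_H : ∀ i j k l, DistinctIndices n [i, j, k, l] → Commute (H i j) (H k l)
  commute_H_G : ∀ i j k l, DistinctIndices n [i, j, k, l] → Commute (H i j) (G k l)
  commute_G_G : ∀ i j k l, DistinctIndices n [i, j, k, l] → Commute (G i j) (G k l)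
  commute_H_E : ∀ i j k, DistinctIndices n [i, j, k] → Commute (H i j) (E k)
  commute_G_E : ∀ i j k, DistinctIndices n [i, j, k] → Commute (G i j) (E k)
  commute_E_E : ∀ i j, inR n i → inR n j → Commute (E i) (E j)

namespace ReflectionSystem

variable {n : ℕ} {M : Type*} [Monoid M] {H G : ℕ → ℕ → M} {E : ℕ → M} {p q r : ℕ}
  {l l' : List ℕ}

theorem commute_hProd_hProd (U : ReflectionSystem n H G E)
    (h : ∀ k ∈ l, ∀ k' ∈ l', DistinctIndices n [p, k, q, k']) :
    Commute (hProd H p l) (hProd H q l') :=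
  commute_hProd_left fun k hk => (commute_hProd_left fun k' hk' =>
    (U.commute_H_H _ _ _ _ (h k hk k' hk')).symm).symm

theorem commute_hProd_gProd (U : ReflectionSystem n H G E)
    (h : ∀ k ∈ l, ∀ k' ∈ l', DistinctIndices n [p, k, k', q]) :
    Commute (hProd H p l) (gProd G q l') :=
  commute_hProd_left fun k hk => (commute_gProd_left fun k' hk' =>
    (U.commute_H_G _ _ _ _ (h k hk k' hk')).symm).symm

theorem commute_hProd_E (U : ReflectionSystem n H G E) (h : ∀ k ∈ l, DistinctIndices n [p, k, r]) :
    Commute (hProd H p l) (E r) :=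
  commute_hProd_left fun k hk => U.commute_H_E _ _ _ (h k hk)

theorem commute_gProd_E (U : ReflectionSystem n H G E) (h : ∀ k ∈ l, DistinctIndices n [k, q, r]) :
    Commute (gProd G q l) (E r) :=
  commute_gProd_left fun k hk => U.commute_G_E _ _ _ (h k hk)

theorem semiconjBy_hProd_mul_hProd (U : ReflectionSystem n H G E) (hl : l.Nodup)
    (h : ∀ k ∈ l, DistinctIndices n [p, q, k]) :
    SemiconjBy (H p q) (hProd H p l * hProd H q l) (hProd H q l * hProd H p l) :=
  semiconjBy_prod_map_mul_prod_map (List.nodup_reverse.2 hl)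
    (fun k hk k' hk' hkk' => U.commute_H_H _ _ _ _ <| by
      have := h k (List.mem_reverse.1 hk); have := h k' (List.mem_reverse.1 hk')
      simp [DistinctIndices, inR] at *; omega)
    (fun k hk => U.yangBaxter _ _ _ (h k (List.mem_reverse.1 hk)))

theorem semiconjBy_gProd_mul_gProd (U : ReflectionSystem n H G E) (hl : l.Nodup)
    (h : ∀ k ∈ l, DistinctIndices n [p, q, k]) :
    SemiconjBy (H p q) (gProd G p l * gProd G q l) (gProd G q l * gProd G p l) :=
  semiconjBy_prod_map_mul_prod_map hl
    (fun k hk k' hk' hkk' => U.commute_G_G _ _ _ _ <| by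
      have := h k hk; have := h k' hk'
      simp [DistinctIndices, inR] at *; omega)
    (fun k hk => by
      have hd := h k hk
      rw [U.G_symm k p (by simp [DistinctIndices, inR] at *; omega),
        U.G_symm k q (by simp [DistinctIndices, inR] at *; omega)]
      exact U.yangBaxter_G p q k hd)

theorem semiconjBy_hProd_G_mul_gProd (U : ReflectionSystem n H G E) (hl : l.Nodup)
    (h : ∀ k ∈ l, DistinctIndices n [p, q, k]) :
    SemiconjBy (hProd H p l) (G p q * gProd G q l) (gProd G q l * G p q) :=
  semiconjBy_prod_map_reverse hl
    (fun k hk k' hk' hkk' => U.commute_H_G _ _ _ _ <| by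
      have := h k hk; have := h k' hk'
      simp [DistinctIndices, inR] at *; omega)
    (fun k hk => U.yangBaxter_G p k q <| by
      have := h k hk; simp [DistinctIndices, inR] at *; omega)

theorem semiconjBy_hProd_gProd_insert (U : ReflectionSystem n H G E) {L₀ L L₁ : List ℕ}
    (hL : L.Nodup) (hpq : ∀ k ∈ L, DistinctIndices n [p, q, k])
    (h : ∀ k ∈ L, ∀ k' ∈ L₀ ++ L₁, DistinctIndices n [p, k, k', q]) :
    SemiconjBy (hProd H p L) (E q * gProd G q (L₀ ++ p :: (L ++ L₁)) * E q)
      (E q * gProd G q (L₀ ++ L ++ p :: L₁) * E q) := by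
  have hE : Commute (hProd H p L) (E q) := U.commute_hProd_E fun k hk => by
    have := hpq k hk; simp [DistinctIndices, inR] at *; omega
  have h₀ : Commute (hProd H p L) (gProd G q L₀) :=
    U.commute_hProd_gProd fun k hk k' hk' => h k hk k' (by simp [hk'])
  have h₁ : Commute (hProd H p L) (gProd G q L₁) :=
    U.commute_hProd_gProd fun k hk k' hk' => h k hk k' (by simp [hk'])
  simpa only [gProd_append, gProd_cons, mul_assoc] using
    (((SemiconjBy.mul_right hE h₀).mul_right (U.semiconjBy_hProd_G_mul_gProd hL hpq)).mul_right
      h₁).mul_right hE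

theorem semiconjBy_reflection (U : ReflectionSystem n H G E) {i j : ℕ} (hi : 1 ≤ i) (hij : i < j)
    (hj : j ≤ n) {K : List ℕ} (hK : K.Nodup) (h : ∀ k ∈ K, DistinctIndices n [i, j, k]) :
    SemiconjBy (H i j) (E i * gProd G i (j :: K) * E i * (E j * gProd G j (K ++ [i]) * E j))
      (E j * gProd G j (i :: K) * E j * (E i * gProd G i (K ++ [j]) * E i)) := by
  have hEE : Commute (E i) (E j) := U.commute_E_E i j ⟨hi, by omega⟩ ⟨by omega, hj⟩
  have hGi : Commute (gProd G i K) (E j) := U.commute_gProd_E fun k hk => by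
    have := h k hk; simp [DistinctIndices, inR] at *; omega
  have hGj : Commute (gProd G j K) (E i) := U.commute_gProd_E fun k hk => by
    have := h k hk; simp [DistinctIndices, inR] at *; omega
  have hG : G j i = G i j := U.G_symm j i (by simp [DistinctIndices, inR]; omega)
  have hx : E i * gProd G i (j :: K) * E i * (E j * gProd G j (K ++ [i]) * E j) =
      E i * G i j * E j * (gProd G i K * gProd G j K) * (E i * G i j * E j) := by
    simp only [gProd_cons, gProd_append, gProd_nil, mul_one, hG, mul_assoc, hEE.left_comm,
      hGi.left_comm, hGj.symm.left_comm]
  have hy : E j * gProd G j (i :: K) * E j * (E i * gProd G i (K ++ [j]) * E i) =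
      E j * G i j * E i * (gProd G j K * gProd G i K) * (E j * G i j * E i) := by
    simp only [gProd_cons, gProd_append, gProd_nil, mul_one, hG, mul_assoc, hEE.symm.left_comm,
      hGj.left_comm, hGi.symm.left_comm]
  rw [hx, hy]
  exact ((U.reflection i j hi hij hj).mul_right (U.semiconjBy_gProd_mul_gProd hK h)).mul_right
    (U.reflection i j hi hij hj)

end ReflectionSystem

section Theta

variable {M : Type*} [Monoid M] (H G : ℕ → ℕ → M) (E : ℕ → M)

/-- `Θ_j` for `h_{ij} = H i j`, `g_{ij} = G i j`, `h_i = E i`, with `h_{ij}⁻¹` written as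
`h_{ji}`. -/
def theta (n j : ℕ) : M :=
  hProd H j (List.Ico 1 j) * E j * gProd G j (List.Ico 1 j ++ List.Ico (j + 1) (n + 1)) * E j *
    hProd H j (List.Ico (j + 1) (n + 1))

variable {H G E} {n i j : ℕ}

local notation "s₁" => List.Ico 1 i
local notation "s₂" => List.Ico (i + 1) j
local notation "s₃" => List.Ico (j + 1) (n + 1)

theorem theta_eq_of_lt_left (hij : i < j) (hj : j ≤ n) :
    theta H G E n i =
      hProd H i s₁ * (E i * gProd G i (s₁ ++ s₂ ++ j :: s₃) * E i) * hProd H i (s₂ ++ j :: s₃) := by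
  rw [theta, List.Ico_eq_append_cons (by omega : i + 1 ≤ j) (by omega : j < n + 1)]
  simp only [List.append_assoc, mul_assoc]

theorem theta_eq_of_lt_right (hi : 1 ≤ i) (hij : i < j) :
    theta H G E n j =
      hProd H j (s₁ ++ i :: s₂) * (E j * gProd G j (s₁ ++ i :: (s₂ ++ s₃)) * E j) *
        hProd H j s₃ := by
  rw [theta, List.Ico_eq_append_cons hi hij]
  simp only [List.append_assoc, List.cons_append, mul_assoc]

theorem ReflectionSystem.hProd_mul_hProd_of_lt (U : ReflectionSystem n H G E) (hi : 1 ≤ i)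
    (hij : i < j) (hj : j ≤ n) :
    hProd H i (s₂ ++ j :: s₃) * hProd H j (s₁ ++ i :: s₂) =
      hProd H j (s₁ ++ s₂) * hProd H i (s₂ ++ s₃) := by
  have hpass := U.semiconjBy_hProd_mul_hProd (p := i) (q := j) (List.Ico.nodup (i + 1) j)
    fun k hk => by simp [List.Ico.mem, DistinctIndices, inR] at *; omega
  have h32 : Commute (hProd H i s₃) (hProd H j s₂) := U.commute_hProd_hProd fun k hk k' hk' => by
    simp [List.Ico.mem, DistinctIndices, inR] at *; omega
  have h31 : Commute (hProd H i s₃) (hProd H j s₁) := U.commute_hProd_hProd fun k hk k' hk' => by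
    simp [List.Ico.mem, DistinctIndices, inR] at *; omega
  have h21 : Commute (hProd H i s₂) (hProd H j s₁) := U.commute_hProd_hProd fun k hk k' hk' => by
    simp [List.Ico.mem, DistinctIndices, inR] at *; omega
  have hinv : H i j * H j i = 1 := U.mul_swap i j (by simp [DistinctIndices, inR]; omega)
  calc hProd H i (s₂ ++ j :: s₃) * hProd H j (s₁ ++ i :: s₂)
      = hProd H i s₃ * (H i j * (hProd H i s₂ * hProd H j s₂)) * H j i * hProd H j s₁ := by
        simp only [hProd_append, hProd_cons, mul_assoc]
    _ = hProd H i s₃ * hProd H j s₂ * hProd H i s₂ * (H i j * H j i) * hProd H j s₁ := by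
        rw [hpass.eq]; simp only [mul_assoc]
    _ = hProd H j s₂ * (hProd H i s₃ * hProd H i s₂ * hProd H j s₁) := by
        rw [hinv, h32.eq]; simp only [mul_one, mul_assoc]
    _ = hProd H j (s₁ ++ s₂) * hProd H i (s₂ ++ s₃) := by
        rw [(h31.mul_left h21).eq]; simp only [hProd_append, mul_assoc]

theorem ReflectionSystem.hProd_mul_hProd_mul_H_of_lt (U : ReflectionSystem n H G E) (hi : 1 ≤ i)
    (hij : i < j) (hj : j ≤ n) :
    hProd H j (s₁ ++ i :: s₂) * hProd H i s₁ * H i j = hProd H i s₁ * hProd H j (s₁ ++ s₂) := by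
  have hpass := U.semiconjBy_hProd_mul_hProd (p := j) (q := i) (List.Ico.nodup 1 i)
    fun k hk => by simp [List.Ico.mem, DistinctIndices, inR] at *; omega
  have h21 : Commute (hProd H j s₂) (hProd H i s₁) := U.commute_hProd_hProd fun k hk k' hk' => by
    simp [List.Ico.mem, DistinctIndices, inR] at *; omega
  have hinv : H j i * H i j = 1 := U.mul_swap j i (by simp [DistinctIndices, inR]; omega)
  calc hProd H j (s₁ ++ i :: s₂) * hProd H i s₁ * H i j
      = hProd H j s₂ * (H j i * (hProd H j s₁ * hProd H i s₁)) * H i j := by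
        simp only [hProd_append, hProd_cons, mul_assoc]
    _ = hProd H j s₂ * hProd H i s₁ * hProd H j s₁ * (H j i * H i j) := by
        rw [hpass.eq]; simp only [mul_assoc]
    _ = hProd H i s₁ * hProd H j (s₁ ++ s₂) := by
        rw [hinv, h21.eq]; simp only [hProd_append, mul_one, mul_assoc]

theorem ReflectionSystem.H_mul_hProd_mul_hProd_of_lt (U : ReflectionSystem n H G E) (hi : 1 ≤ i)
    (hij : i < j) (hj : j ≤ n) :
    H j i * (hProd H j s₃ * hProd H i (s₂ ++ j :: s₃)) = hProd H i (s₂ ++ s₃) * hProd H j s₃ := by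
  have hpass := U.semiconjBy_hProd_mul_hProd (p := j) (q := i) (List.Ico.nodup (j + 1) (n + 1))
    fun k hk => by simp [List.Ico.mem, DistinctIndices, inR] at *; omega
  have h32 : Commute (hProd H j s₃) (hProd H i s₂) := U.commute_hProd_hProd fun k hk k' hk' => by
    simp [List.Ico.mem, DistinctIndices, inR] at *; omega
  have hinv : H j i * H i j = 1 := U.mul_swap j i (by simp [DistinctIndices, inR]; omega)
  calc H j i * (hProd H j s₃ * hProd H i (s₂ ++ j :: s₃))
      = H j i * (hProd H j s₃ * hProd H i s₃) * H i j * hProd H i s₂ := by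
        simp only [hProd_append, hProd_cons, mul_assoc]
    _ = hProd H i s₃ * (hProd H j s₃ * (H j i * H i j) * hProd H i s₂) := by
        rw [hpass.eq]; simp only [mul_assoc]
    _ = hProd H i (s₂ ++ s₃) * hProd H j s₃ := by
        rw [hinv, mul_one, h32.eq]; simp only [hProd_append, mul_assoc]

theorem ReflectionSystem.theta_mul_theta_of_lt (U : ReflectionSystem n H G E) (hi : 1 ≤ i)
    (hij : i < j) (hj : j ≤ n) :
    theta H G E n i * theta H G E n j =
      hProd H i s₁ * hProd H j (s₁ ++ s₂) *
        (E i * gProd G i (j :: (s₁ ++ s₂ ++ s₃)) * E i *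
          (E j * gProd G j (s₁ ++ s₂ ++ s₃ ++ [i]) * E j)) *
        (hProd H i (s₂ ++ s₃) * hProd H j s₃) := by
  have hY : SemiconjBy (hProd H j (s₁ ++ s₂)) (E i * gProd G i (j :: (s₁ ++ s₂ ++ s₃)) * E i)
      (E i * gProd G i (s₁ ++ s₂ ++ j :: s₃) * E i) := by
    simpa only [List.nil_append, List.append_assoc] using
      U.semiconjBy_hProd_gProd_insert (L₀ := []) (L := s₁ ++ s₂) (L₁ := s₃)
        (List.nodup_Ico_append_Ico (Nat.le_succ i))
        (fun k hk => by simp [List.Ico.mem, DistinctIndices, inR] at *; omega)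
        (fun k hk k' hk' => by simp [List.Ico.mem, DistinctIndices, inR] at *; omega)
  have hX : SemiconjBy (hProd H i (s₂ ++ s₃)) (E j * gProd G j (s₁ ++ i :: (s₂ ++ s₃)) * E j)
      (E j * gProd G j (s₁ ++ s₂ ++ s₃ ++ [i]) * E j) := by
    simpa only [List.append_nil, List.append_assoc] using
      U.semiconjBy_hProd_gProd_insert (L₀ := s₁) (L := s₂ ++ s₃) (L₁ := [])
        (List.nodup_Ico_append_Ico (Nat.le_succ j))
        (fun k hk => by simp [List.Ico.mem, DistinctIndices, inR] at *; omega)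
        (fun k hk k' hk' => by simp [List.Ico.mem, DistinctIndices, inR] at *; omega)
  rw [theta_eq_of_lt_left hij hj, theta_eq_of_lt_right hi hij]
  calc _ = hProd H i s₁ * (E i * gProd G i (s₁ ++ s₂ ++ j :: s₃) * E i) *
        (hProd H i (s₂ ++ j :: s₃) * hProd H j (s₁ ++ i :: s₂)) *
        (E j * gProd G j (s₁ ++ i :: (s₂ ++ s₃)) * E j) * hProd H j s₃ := by
        simp only [mul_assoc]
    _ = hProd H i s₁ * (E i * gProd G i (s₁ ++ s₂ ++ j :: s₃) * E i * hProd H j (s₁ ++ s₂)) *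
        (hProd H i (s₂ ++ s₃) * (E j * gProd G j (s₁ ++ i :: (s₂ ++ s₃)) * E j)) *
        hProd H j s₃ := by
        rw [U.hProd_mul_hProd_of_lt hi hij hj]; simp only [mul_assoc]
    _ = _ := by
        rw [← hY.eq, hX.eq]; simp only [mul_assoc]

theorem ReflectionSystem.theta_mul_theta_of_gt (U : ReflectionSystem n H G E) (hi : 1 ≤ i)
    (hij : i < j) (hj : j ≤ n) :
    theta H G E n j * theta H G E n i =
      hProd H j (s₁ ++ i :: s₂) * hProd H i s₁ *
        (E j * gProd G j (i :: (s₁ ++ s₂ ++ s₃)) * E j *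
          (E i * gProd G i (s₁ ++ s₂ ++ s₃ ++ [j]) * E i)) *
        (hProd H j s₃ * hProd H i (s₂ ++ j :: s₃)) := by
  have hA : SemiconjBy (hProd H i s₁) (E j * gProd G j (i :: (s₁ ++ s₂ ++ s₃)) * E j)
      (E j * gProd G j (s₁ ++ i :: (s₂ ++ s₃)) * E j) := by
    simpa only [List.nil_append, List.append_assoc] using
      U.semiconjBy_hProd_gProd_insert (L₀ := []) (L := s₁) (L₁ := s₂ ++ s₃) (List.Ico.nodup 1 i)
        (fun k hk => by simp [List.Ico.mem, DistinctIndices, inR] at *; omega)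
        (fun k hk k' hk' => by simp [List.Ico.mem, DistinctIndices, inR] at *; omega)
  have hB : SemiconjBy (hProd H j s₃) (E i * gProd G i (s₁ ++ s₂ ++ j :: s₃) * E i)
      (E i * gProd G i (s₁ ++ s₂ ++ s₃ ++ [j]) * E i) := by
    simpa only [List.append_nil, List.append_assoc] using
      U.semiconjBy_hProd_gProd_insert (L₀ := s₁ ++ s₂) (L := s₃) (L₁ := [])
        (List.Ico.nodup (j + 1) (n + 1))
        (fun k hk => by simp [List.Ico.mem, DistinctIndices, inR] at *; omega)
        (fun k hk k' hk' => by simp [List.Ico.mem, DistinctIndices, inR] at *; omega)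
  have hBA : Commute (hProd H j s₃) (hProd H i s₁) := U.commute_hProd_hProd fun k hk k' hk' => by
    simp [List.Ico.mem, DistinctIndices, inR] at *; omega
  rw [theta_eq_of_lt_left hij hj, theta_eq_of_lt_right hi hij]
  calc _ = hProd H j (s₁ ++ i :: s₂) * (E j * gProd G j (s₁ ++ i :: (s₂ ++ s₃)) * E j) *
        (hProd H j s₃ * hProd H i s₁) * (E i * gProd G i (s₁ ++ s₂ ++ j :: s₃) * E i) *
        hProd H i (s₂ ++ j :: s₃) := by
        simp only [mul_assoc]
    _ = hProd H j (s₁ ++ i :: s₂) * (E j * gProd G j (s₁ ++ i :: (s₂ ++ s₃)) * E j * hProd H i s₁) *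
        (hProd H j s₃ * (E i * gProd G i (s₁ ++ s₂ ++ j :: s₃) * E i)) *
        hProd H i (s₂ ++ j :: s₃) := by
        rw [hBA.eq]; simp only [mul_assoc]
    _ = _ := by
        rw [← hA.eq, hB.eq]; simp only [mul_assoc]

theorem ReflectionSystem.commute_theta_of_lt (U : ReflectionSystem n H G E) (hi : 1 ≤ i)
    (hij : i < j) (hj : j ≤ n) : Commute (theta H G E n i) (theta H G E n j) := by
  have hK : (s₁ ++ s₂ ++ s₃).Nodup :=
    List.nodup_append.2 ⟨List.nodup_Ico_append_Ico (Nat.le_succ i), List.Ico.nodup _ _,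
      fun k hk k' hk' => by simp [List.Ico.mem] at hk hk'; omega⟩
  have hM := U.semiconjBy_reflection hi hij hj hK fun k hk => by
    simp [List.Ico.mem, DistinctIndices, inR] at *; omega
  have hinv : ∀ t, H i j * (H j i * t) = t := fun t => by
    rw [← mul_assoc, U.mul_swap i j (by simp [DistinctIndices, inR]; omega), one_mul]
  calc theta H G E n i * theta H G E n j
      = hProd H j (s₁ ++ i :: s₂) * hProd H i s₁ *
          (H i j * (E i * gProd G i (j :: (s₁ ++ s₂ ++ s₃)) * E i *
            (E j * gProd G j (s₁ ++ s₂ ++ s₃ ++ [i]) * E j))) *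
          (H j i * (hProd H j s₃ * hProd H i (s₂ ++ j :: s₃))) := by
        rw [U.theta_mul_theta_of_lt hi hij hj, ← U.hProd_mul_hProd_mul_H_of_lt hi hij hj,
          ← U.H_mul_hProd_mul_hProd_of_lt hi hij hj, mul_assoc (_ * hProd H i s₁)]
    _ = theta H G E n j * theta H G E n i := by
        rw [hM.eq, U.theta_mul_theta_of_gt hi hij hj]
        simp only [mul_assoc, hinv]

end Theta

section OneAdd

variable {A : Type*} [Ring A]

theorem semiconjBy_one_add_of_yangBaxter {P Q S : A} (hP : P * P = 0)
    (h₁ : P * S = S * Q + Q * P) (h₂ : S * P = P * Q + Q * S) :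
    SemiconjBy (1 + P) ((1 + Q) * (1 + S)) ((1 + S) * (1 + Q)) := by
  unfold SemiconjBy
  linear_combination (norm := noncomm_ring) h₁ - h₂ - P * h₂ + h₁ * P - hP * Q + Q * hP

theorem semiconjBy_one_add_of_reflection {X B D₁ D₂ : A} (hX : X * X = 0) (hD₁ : D₁ * D₁ = 0)
    (hXB : X * B = B * X) (hD : D₁ * D₂ = D₂ * D₁)
    (h₁ : X * D₁ + D₁ * B + B * D₂ = D₂ * X) (h₂ : D₁ * X + D₂ * B + B * D₁ = X * D₂)
    (h₆ : X * D₁ * B * D₂ = D₂ * B * D₁ * X) :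
    SemiconjBy (1 + X) ((1 + D₁) * (1 + B) * (1 + D₂)) ((1 + D₂) * (1 + B) * (1 + D₁)) := by
  unfold SemiconjBy
  linear_combination (norm := noncomm_ring) hD + h₁ - h₂ + hXB + hD * X + X * hD
    + D₁ * h₁ + X * h₁ - h₂ * D₁ - h₂ * X - hD₁ * B + B * hD₁ + D₁ * hX - hX * D₁ + h₆

theorem one_add_mul_one_add_neg {u : A} (hu : u * u = 0) : (1 + u) * (1 + -u) = 1 := by
  linear_combination (norm := noncomm_ring) -hu

variable {R : Type*} [CommRing R] [Algebra R A]

theorem commute_one_add_smul {u v : A} (h : Commute u v) (r s : R) :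
    Commute (1 + r • u) (1 + s • v) :=
  (Commute.one_left _).add_left ((Commute.one_right _).add_right ((h.smul_left r).smul_right s))

theorem smul_mul_smul_eq_zero {u v : A} (h : u * v = 0) (r s : R) : r • u * s • v = 0 := by
  rw [smul_mul_smul_comm, h, smul_zero]

theorem smul_mul_smul_eq_add {u v w z t t' : A} (h : u * v = w * z + t * t') (r : R) :
    r • u * r • v = r • w * r • z + r • t * r • t' := by
  simp only [smul_mul_smul_comm, h, smul_add]

end OneAdd

namespace BEBnRels

variable {n : ℕ} {R A : Type*} [CommRing R] [Ring A] [Algebra R A] {a b : ℕ → ℕ → A}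
  {c : ℕ → A}

theorem semiconjBy_yangBaxter (rels : BEBnRels n a b c) (x : R) {i j k : ℕ}
    (h : DistinctIndices n [i, j, k]) :
    SemiconjBy (1 + x • a i j) ((1 + x • a i k) * (1 + x • a j k))
      ((1 + x • a j k) * (1 + x • a i k)) := by
  obtain ⟨⟨⟨hij, hik⟩, hjk⟩, hi, hj, hk⟩ := by simpa [DistinctIndices] using h
  have h₁ := rels.r4a i j k hi hj hk hij hjk hik
  have h₂ := rels.r4a j i k hj hi hk (Ne.symm hij) hik hjk
  rw [rels.r0a k i hk hi (Ne.symm hik)] at h₁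
  rw [rels.r0a j i hj hi (Ne.symm hij), rels.r0a k j hk hj (Ne.symm hjk)] at h₂
  exact semiconjBy_one_add_of_yangBaxter (smul_mul_smul_eq_zero (rels.r1a i j hi hj hij) x x)
    (smul_mul_smul_eq_add (by linear_combination (norm := noncomm_ring) h₁) x)
    (smul_mul_smul_eq_add (by linear_combination (norm := noncomm_ring) h₂) x)

theorem semiconjBy_yangBaxter_bar (rels : BEBnRels n a b c) (x : R) {i j k : ℕ}
    (h : DistinctIndices n [i, j, k]) :
    SemiconjBy (1 + x • a i j) ((1 + x • b i k) * (1 + x • b j k))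
      ((1 + x • b j k) * (1 + x • b i k)) := by
  obtain ⟨⟨⟨hij, hik⟩, hjk⟩, hi, hj, hk⟩ := by simpa [DistinctIndices] using h
  have h₁ := rels.r4b i j k hi hj hk hij hjk hik
  have h₂ := rels.r4b j i k hj hi hk (Ne.symm hij) hik hjk
  rw [rels.r0a j i hj hi (Ne.symm hij), rels.r0b k j hk hj (Ne.symm hjk)] at h₁
  rw [rels.r0a j i hj hi (Ne.symm hij), rels.r0b k i hk hi (Ne.symm hik)] at h₂
  exact semiconjBy_one_add_of_yangBaxter (smul_mul_smul_eq_zero (rels.r1a i j hi hj hij) x x)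
    (smul_mul_smul_eq_add (by linear_combination (norm := noncomm_ring) -h₁) x)
    (smul_mul_smul_eq_add (by linear_combination (norm := noncomm_ring) -h₂) x)

theorem semiconjBy_reflection (rels : BEBnRels n a b c) (x y : R) {i j : ℕ} (hi : 1 ≤ i)
    (hij : i < j) (hj : j ≤ n) :
    SemiconjBy (1 + x • a i j) ((1 + y • c i) * (1 + x • b i j) * (1 + y • c j))
      ((1 + y • c j) * (1 + x • b i j) * (1 + y • c i)) := by
  have hi' : inR n i := ⟨hi, by omega⟩
  have hj' : inR n j := ⟨by omega, hj⟩
  have hne : i ≠ j := hij.ne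
  have h₁ := rels.r4c i j hi' hj' hne
  have h₂ := rels.r4c j i hj' hi' hne.symm
  rw [rels.r0a j i hj' hi' hne.symm] at h₁
  rw [rels.r0a j i hj' hi' hne.symm, rels.r0b j i hj' hi' hne.symm] at h₂
  have h₁' : a i j * c i + c i * b i j + b i j * c j = c j * a i j := by
    linear_combination (norm := noncomm_ring) h₁
  have h₂' : c i * a i j + c j * b i j + b i j * c i = a i j * c j := by
    linear_combination (norm := noncomm_ring) h₂
  apply semiconjBy_one_add_of_reflection (smul_mul_smul_eq_zero (rels.r1a i j hi' hj' hne) x x)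
    (smul_mul_smul_eq_zero (rels.r1c i hi') y y)
    ((Commute.smul_left (rels.r3ab i j hi' hj' hne) x).smul_right x).eq
    ((Commute.smul_left (rels.r3cc i j hi' hj') y).smul_right y).eq
  · simp only [smul_mul_smul_comm, mul_comm y x, ← smul_add, h₁']
  · simp only [smul_mul_smul_comm, mul_comm y x, ← smul_add, h₂']
  · simp only [smul_mul_smul_comm, rels.r6 i j hi hij hj]
    congr 1
    ring

theorem reflectionSystem (rels : BEBnRels n a b c) (x y : R) :
    ReflectionSystem n (fun i j => 1 + x • a i j) (fun i j => 1 + x • b i j)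
      (fun i => 1 + y • c i) where
  mul_swap i j h := by
    obtain ⟨hij, hi, hj⟩ := by simpa [DistinctIndices] using h
    rw [rels.r0a j i hj hi (Ne.symm hij), smul_neg]
    exact one_add_mul_one_add_neg (smul_mul_smul_eq_zero (rels.r1a i j hi hj hij) x x)
  G_symm i j h := by
    obtain ⟨hij, hi, hj⟩ := by simpa [DistinctIndices] using h
    rw [rels.r0b i j hi hj hij]
  yangBaxter _ _ _ := rels.semiconjBy_yangBaxter x
  yangBaxter_G _ _ _ := rels.semiconjBy_yangBaxter_bar x
  reflection _ _ := rels.semiconjBy_reflection x y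
  commute_H_H i j k l h := by
    obtain ⟨⟨⟨hij, hik, hil⟩, ⟨hjk, hjl⟩, hkl⟩, hi, hj, hk, hl⟩ := by
      simpa [DistinctIndices] using h
    exact commute_one_add_smul (rels.r2aa i j k l hi hj hk hl hij hkl hik hil hjk hjl) x x
  commute_H_G i j k l h := by
    obtain ⟨⟨⟨hij, hik, hil⟩, ⟨hjk, hjl⟩, hkl⟩, hi, hj, hk, hl⟩ := by
      simpa [DistinctIndices] using h
    exact commute_one_add_smul
      (rels.r2ba k l i j hk hl hi hj hkl hij (Ne.symm hik) (Ne.symm hjk) (Ne.symm hil)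
        (Ne.symm hjl)).symm x x
  commute_G_G i j k l h := by
    obtain ⟨⟨⟨hij, hik, hil⟩, ⟨hjk, hjl⟩, hkl⟩, hi, hj, hk, hl⟩ := by
      simpa [DistinctIndices] using h
    exact commute_one_add_smul (rels.r2bb i j k l hi hj hk hl hij hkl hik hil hjk hjl) x x
  commute_H_E i j k h := by
    obtain ⟨⟨⟨hij, hik⟩, hjk⟩, hi, hj, hk⟩ := by simpa [DistinctIndices] using h
    exact commute_one_add_smul (rels.r3ac i j k hi hj hk hij (Ne.symm hik) (Ne.symm hjk)) x y
  commute_G_E i j k h := by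
    obtain ⟨⟨⟨hij, hik⟩, hjk⟩, hi, hj, hk⟩ := by simpa [DistinctIndices] using h
    exact commute_one_add_smul (rels.r3bc i j k hi hj hk hij (Ne.symm hik) (Ne.symm hjk)) x y
  commute_E_E i j hi hj := commute_one_add_smul (rels.r3cc i j hi hj) y y

end BEBnRels

theorem ThetaB_eq_theta {n j : ℕ} (hj : inR n j) {R A : Type*} [CommRing R] [Ring A]
    [Algebra R A] (a b : ℕ → ℕ → A) (c : ℕ → A) (x y : R) :
    ThetaB n a b c x y j =
      theta (fun i j => 1 + x • a i j) (fun i j => 1 + x • b i j) (fun i => 1 + y • c i) n j := by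
  have hn : List.range' 1 n = List.Ico 1 (n + 1) := by simp [List.Ico]
  have hj' : List.range' (j + 1) (n - j) = List.Ico (j + 1) (n + 1) := by simp [List.Ico]
  rw [ThetaB, hn, hj', List.filter_ne_Ico hj]
  rfl

theorem RSM_elements_commute_in_BE_Bn_general (n : ℕ)
    (R : Type*) [CommRing R] (A : Type*) [Ring A] [Algebra R A]
    (a b : ℕ → ℕ → A) (c : ℕ → A) (rels : BEBnRels n a b c) (x y : R) :
    ∀ i j, inR n i → inR n j →
      ThetaB n a b c x y i * ThetaB n a b c x y j =
        ThetaB n a b c x y j * ThetaB n a b c x y i := by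
  intro i j hi hj
  rw [ThetaB_eq_theta hi, ThetaB_eq_theta hj]
  rcases lt_trichotomy i j with hij | rfl | hji
  · exact (rels.reflectionSystem x y).commute_theta_of_lt hi.1 hij hj.2
  · rfl
  · exact ((rels.reflectionSystem x y).commute_theta_of_lt hj.1 hji hi.2).symm

/-- in `𝒷ℰ(B_n) ⊗ R` the RSM-elements `Θ_1^{B_n}(x,y), …, Θ_n^{B_n}(x,y)`
pairwise commute. -/
theorem RSM_elements_commute_in_BE_Bn (n : ℕ) (hn : 2 ≤ n)
    (R : Type*) [CommRing R] [Algebra ℚ R] (A : Type*) [Ring A] [Algebra R A]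
    (a b : ℕ → ℕ → A) (c : ℕ → A) (rels : BEBnRels n a b c) (x y : R) :
    ∀ i j, inR n i → inR n j →
      ThetaB n a b c x y i * ThetaB n a b c x y j =
        ThetaB n a b c x y j * ThetaB n a b c x y i :=
  RSM_elements_commute_in_BE_Bn_general n R A a b c rels x y

end Stmt15
end

section
/- Work in 𝒷ℰ(B_n) with Θ_j := Θ_j^{B_n}(1,1). (a) Fix 1 ≤ i ≤ n − 1 and suppose Δ : 𝒷ℰ(B_n) → 𝒷ℰ(B_n) is a ℚ-linear map satisfying the twisted Leibniz rule Δ(uv) = Δ(u)v + s_i(u)Δ(v) for all u, v, with Δ([i,i+1]) = 1 and Δ vanishing on every other generator ([k,l] for {k,l} ≠ {i,i+1}, all \overline{[k,l]}, and all [k]). Then Q := h_{i,i+1}^{-1} ∘ Δ satisfies Q(Θ_i) = Θ_{i+1}, Q(Θ_{i+1}) = −Θ_{i+1}, and Q(Θ_j) = 0 for j ≠ i, i+1. (b) Suppose Δ_n : 𝒷ℰ(B_n) → 𝒷ℰ(B_n) is a ℚ-linear map with Δ_n(uv) = Δ_n(u)v + s_n(u)Δ_n(v), Δ_n([n]) =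 1, and Δ_n vanishing on all other generators. Then Q_n := h_n^{-1} ∘ Δ_n satisfies Q_n(Θ_n) = 1 + Θ_n^{-1} and Q_n(Θ_j) = 0 for j ≠ n. -/
/-!
A twisted derivation that vanishes on each factor of a product vanishes on the product, so
`Δ` only sees the factors of `Θ_j` built from the distinguished generator. For `s_i`, writing
`Θ_i = P · h_{i,i+1}`, the transposition turns `P` into the factors of `Θ_{i+1}` other than its
first one, `h_{i+1,i}`: `Θ_{i+1} = h_{i+1,i} · s_i(P)`, and `Δ` kills both `P` and `s_i(P)`,
so the Leibniz rule gives both identities at once. For `s_n`, writing `Θ_n = L · h_n · G · h_n`,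
the swap `[k,n] ↔ \overline{[k,n]}` sends `L` to `G⁻¹` and `G` to `L⁻¹`, which turns
`Δ_n(Θ_n) = s_n(L) G h_n + s_n(L) h_n⁻¹ s_n(G)` into `h_n (1 + Θ_n⁻¹)`.
-/

namespace Stmt16

/-- `i` is in the index range `{1, …, n}`. -/
def inR (n i : ℕ) : Prop := 1 ≤ i ∧ i ≤ n

/-- The defining relations (0)–(6) of the algebra `𝒷ℰ(B_n)` for elements
`a i j = [i,j]`, `b i j = \overline{[i,j]}` (`1 ≤ i ≠ j ≤ n`) and `c i = [i]`
(`1 ≤ i ≤ n`) of an associative unital ring `A`. -/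
structure BEBnRels (n : ℕ) {A : Type*} [Ring A]
    (a b : ℕ → ℕ → A) (c : ℕ → A) : Prop where
  r0a : ∀ i j, inR n i → inR n j → i ≠ j → a i j = -a j i
  r0b : ∀ i j, inR n i → inR n j → i ≠ j → b i j = b j i
  r1a : ∀ i j, inR n i → inR n j → i ≠ j → a i j * a i j = 0
  r1b : ∀ i j, inR n i → inR n j → i ≠ j → b i j * b i j = 0
  r1c : ∀ i, inR n i → c i * c i = 0
  r2aa : ∀ i j k l, inR n i → inR n j → inR n k → inR n l →
      i ≠ j → k ≠ l → i ≠ k → i ≠ l → j ≠ k → j ≠ l →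
      a i j * a k l = a k l * a i j
  r2ba : ∀ i j k l, inR n i → inR n j → inR n k → inR n l →
      i ≠ j → k ≠ l → i ≠ k → i ≠ l → j ≠ k → j ≠ l →
      b i j * a k l = a k l * b i j
  r2bb : ∀ i j k l, inR n i → inR n j → inR n k → inR n l →
      i ≠ j → k ≠ l → i ≠ k → i ≠ l → j ≠ k → j ≠ l →
      b i j * b k l = b k l * b i j
  r3cc : ∀ i j, inR n i → inR n j → c i * c j = c j * c i
  r3ab : ∀ i j, inR n i → inR n j → i ≠ j → a i j * b i j = b i j * a i j
  r3ac : ∀ i j k, inR n i → inR n j → inR n k → i ≠ j → k ≠ i → k ≠ j →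
      a i j * c k = c k * a i j
  r3bc : ∀ i j k, inR n i → inR n j → inR n k → i ≠ j → k ≠ i → k ≠ j →
      b i j * c k = c k * b i j
  r4a : ∀ i j k, inR n i → inR n j → inR n k → i ≠ j → j ≠ k → i ≠ k →
      a i j * a j k + a j k * a k i + a k i * a i j = 0
  r4b : ∀ i j k, inR n i → inR n j → inR n k → i ≠ j → j ≠ k → i ≠ k →
      b i k * a i j + a j i * b j k + b k j * b i k = 0
  r4c : ∀ i j, inR n i → inR n j → i ≠ j →
      a i j * c i + c j * a j i + c i * b i j + b i j * c j = 0
  r5 : ∀ i j, 1 ≤ i → i < j → j ≤ n →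
      a i j * c i * b i j * c i + b i j * c i * a i j * c i +
        c i * a i j * c i * b i j + c i * b i j * c i * a i j = 0
  r6 : ∀ i j, 1 ≤ i → i < j → j ≤ n →
      a i j * c i * b i j * c j = c j * b i j * c i * a i j

/-- The RSM-element `Θ_j := Θ_j^{B_n}(1,1)` in `𝒷ℰ(B_n)`:
`Θ_j = (h_{j-1,j}⁻¹ ⋯ h_{1,j}⁻¹) · h_j · (∏_{i ≠ j} g_{ij}, increasing i) · h_j ·
(h_{j,n} ⋯ h_{j,j+1})`, where `h_{ij} = 1 + [i,j]`, `g_{ij} = 1 + \overline{[i,j]}`,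
`h_j = 1 + [j]`, and `h_{ij}⁻¹ = h_{ji} = 1 + [j,i]`. -/
def ThetaB1 (n : ℕ) {A : Type*} [Ring A] (a b : ℕ → ℕ → A) (c : ℕ → A) (j : ℕ) : A :=
  ((List.range' 1 (j - 1)).reverse.map fun i => 1 + a j i).prod *
    (1 + c j) *
    (((List.range' 1 n).filter fun i => decide (i ≠ j)).map fun i => 1 + b i j).prod *
    (1 + c j) *
    ((List.range' (j + 1) (n - j)).reverse.map fun k => 1 + a j k).prod

/-- The transposition `σ_i = (i, i+1)` acting on indices. -/
def sigma (i k : ℕ) : ℕ := if k = i then i + 1 else if k = i + 1 then i else k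

section TwistedDerivation

variable {A : Type*} [Ring A]

def IsTwistedDerivation (s : A →+* A) (Δ : A →+ A) : Prop :=
  ∀ u v, Δ (u * v) = Δ u * v + s u * Δ v

namespace IsTwistedDerivation

variable {s : A →+* A} {Δ : A →+ A}

theorem map_one_eq_zero (hΔ : IsTwistedDerivation s Δ) : Δ 1 = 0 := by
  simpa using hΔ 1 1

theorem map_one_add (hΔ : IsTwistedDerivation s Δ) (x : A) : Δ (1 + x) = Δ x := by
  rw [map_add, hΔ.map_one_eq_zero, zero_add]

theorem map_mul_of_map_left_eq_zero (hΔ : IsTwistedDerivation s Δ) {u : A} (hu : Δ u = 0)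
    (v : A) : Δ (u * v) = s u * Δ v := by
  rw [hΔ, hu, zero_mul, zero_add]

theorem map_mul_of_map_right_eq_zero (hΔ : IsTwistedDerivation s Δ) (u : A) {v : A}
    (hv : Δ v = 0) : Δ (u * v) = Δ u * v := by
  rw [hΔ, hv, mul_zero, add_zero]

theorem map_list_prod_eq_zero (hΔ : IsTwistedDerivation s Δ) {l : List A}
    (hl : ∀ x ∈ l, Δ x = 0) : Δ l.prod = 0 := by
  induction l with
  | nil => exact hΔ.map_one_eq_zero
  | cons x l ih =>
    rw [List.prod_cons, hΔ.map_mul_of_map_left_eq_zero (hl x List.mem_cons_self),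
      ih fun y hy => hl y (List.mem_cons_of_mem x hy), mul_zero]

end IsTwistedDerivation

end TwistedDerivation

theorem one_sub_mul_one_add_of_mul_self_eq_zero {A : Type*} [Ring A] {x : A}
    (hx : x * x = 0) : (1 - x) * (1 + x) = 1 := by
  rw [show (1 - x) * (1 + x) = 1 - x * x by noncomm_ring, hx, sub_zero]

theorem one_add_mul_one_sub_of_mul_self_eq_zero {A : Type*} [Ring A] {x : A}
    (hx : x * x = 0) : (1 + x) * (1 - x) = 1 := by
  rw [show (1 + x) * (1 - x) = 1 - x * x by noncomm_ring, hx, sub_zero]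

theorem list_prod_map_reverse_mul_prod_map_eq_one {ι M : Type*} [Monoid M] (l : List ι)
    {f g : ι → M} (h : ∀ k ∈ l, f k * g k = 1) :
    (l.reverse.map f).prod * (l.map g).prod = 1 := by
  induction l with
  | nil => simp
  | cons x l ih =>
    simp only [List.reverse_cons, List.map_append, List.map_cons, List.map_nil,
      List.prod_append, List.prod_cons, List.prod_nil, mul_one]
    rw [mul_assoc, ← mul_assoc (f x), h x List.mem_cons_self, one_mul,
      ih fun k hk => h k (List.mem_cons_of_mem x hk)]

theorem list_prod_one_sub_mul_prod_one_add {ι A : Type*} [Ring A] (l : List ι) {x : ι → A}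
    (hx : ∀ k ∈ l, x k * x k = 0) :
    (l.reverse.map fun k => 1 - x k).prod * (l.map fun k => 1 + x k).prod = 1 ∧
      (l.map fun k => 1 + x k).prod * (l.reverse.map fun k => 1 - x k).prod = 1 := by
  constructor
  · exact list_prod_map_reverse_mul_prod_map_eq_one l fun k hk =>
      one_sub_mul_one_add_of_mul_self_eq_zero (hx k hk)
  · simpa using list_prod_map_reverse_mul_prod_map_eq_one l.reverse fun k hk =>
      one_add_mul_one_sub_of_mul_self_eq_zero (hx k (List.mem_reverse.1 hk))

theorem sigma_self (i : ℕ) : sigma i i = i + 1 := if_pos rfl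

theorem sigma_of_ne {i k : ℕ} (h : k ≠ i) (h' : k ≠ i + 1) : sigma i k = k := by
  simp [sigma, h, h']

theorem range'_one_eq_append_cons {n i : ℕ} (hi : 1 ≤ i) (hin : i + 1 ≤ n) :
    List.range' 1 n =
      List.range' 1 (i - 1) ++ i :: (i + 1) :: List.range' (i + 2) (n - i - 1) := by
  conv_lhs => rw [show n = (i - 1) + (n - i - 1 + 1 + 1) by omega]
  rw [← List.range'_append_1, List.range'_succ, List.range'_succ, show 1 + (i - 1) = i by omega]

theorem filter_ne_eq_self {l : List ℕ} {j : ℕ} (h : ∀ k ∈ l, k ≠ j) :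
    l.filter (fun k => decide (k ≠ j)) = l :=
  List.filter_eq_self.2 (by simpa using h)

theorem inR_of_mem_filter_range' {n j k : ℕ}
    (hk : k ∈ (List.range' 1 n).filter fun k => decide (k ≠ j)) : inR n k ∧ k ≠ j := by
  simp only [List.mem_filter, List.mem_range'_1, decide_eq_true_eq] at hk
  exact ⟨⟨hk.1.1, by omega⟩, hk.2⟩

theorem map_sigma_eq_self {l : List ℕ} {i : ℕ} (h : ∀ k ∈ l, k ≠ i ∧ k ≠ i + 1) :
    l.map (sigma i) = l :=
  (List.map_congr_left fun k hk => sigma_of_ne (h k hk).1 (h k hk).2).trans l.map_id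

theorem map_sigma_filter_range' {n i : ℕ} (hi : 1 ≤ i) (hin : i + 1 ≤ n) :
    ((List.range' 1 n).filter fun k => decide (k ≠ i)).map (sigma i) =
      (List.range' 1 n).filter fun k => decide (k ≠ i + 1) := by
  have hlow : ∀ k ∈ List.range' 1 (i - 1), k ≠ i ∧ k ≠ i + 1 := fun k hk => by
    rw [List.mem_range'_1] at hk; omega
  have hhigh : ∀ k ∈ List.range' (i + 2) (n - i - 1), k ≠ i ∧ k ≠ i + 1 := fun k hk => by
    rw [List.mem_range'_1] at hk; omega
  rw [range'_one_eq_append_cons hi hin, List.filter_append, List.filter_append,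
    List.filter_cons_of_neg (by simp), List.filter_cons_of_pos (by simp),
    List.filter_cons_of_pos (by simp), List.filter_cons_of_neg (by simp),
    filter_ne_eq_self fun k hk => (hlow k hk).1, filter_ne_eq_self fun k hk => (hlow k hk).2,
    filter_ne_eq_self fun k hk => (hhigh k hk).1, filter_ne_eq_self fun k hk => (hhigh k hk).2,
    List.map_append, List.map_cons, map_sigma_eq_self hlow, map_sigma_eq_self hhigh]
  simp [sigma]

section RSMFactors

variable {A : Type*} [Ring A] {n : ℕ} {a b : ℕ → ℕ → A} {c : ℕ → A}

/-- The factors of `Θ_j` with the index lists of its three products left free, so that splitting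
off an end factor of `Θ_j` or applying `s_i` stays within this shape. -/
def rsmFactors (a b : ℕ → ℕ → A) (c : ℕ → A) (j : ℕ) (l m r : List ℕ) : List A :=
  l.reverse.map (fun k => 1 + a j k) ++ [1 + c j] ++ m.map (fun k => 1 + b k j) ++
    [1 + c j] ++ r.reverse.map (fun k => 1 + a j k)

theorem ThetaB1_eq_prod_rsmFactors (j : ℕ) :
    ThetaB1 n a b c j = (rsmFactors a b c j (List.range' 1 (j - 1))
      ((List.range' 1 n).filter fun k => decide (k ≠ j)) (List.range' (j + 1) (n - j))).prod := by
  simp only [ThetaB1, rsmFactors, List.prod_append, List.prod_singleton]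

theorem ThetaB1_eq_prod_rsmFactors_mul {i : ℕ} (hin : i + 1 ≤ n) :
    ThetaB1 n a b c i = (rsmFactors a b c i (List.range' 1 (i - 1))
      ((List.range' 1 n).filter fun k => decide (k ≠ i)) (List.range' (i + 2) (n - i - 1))).prod *
      (1 + a i (i + 1)) := by
  rw [ThetaB1_eq_prod_rsmFactors]
  conv_lhs => rw [show n - i = n - i - 1 + 1 by omega, List.range'_succ]
  simp only [rsmFactors, List.reverse_cons, List.map_append, List.map_cons, List.map_nil,
    List.prod_append, List.prod_cons, List.prod_nil, mul_one, mul_assoc]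

theorem ThetaB1_succ_eq_mul_prod_rsmFactors {i : ℕ} (hi : 1 ≤ i) :
    ThetaB1 n a b c (i + 1) = (1 + a (i + 1) i) * (rsmFactors a b c (i + 1) (List.range' 1 (i - 1))
      ((List.range' 1 n).filter fun k => decide (k ≠ i + 1))
      (List.range' (i + 2) (n - i - 1))).prod := by
  obtain ⟨m, rfl⟩ : ∃ m, i = m + 1 := ⟨i - 1, by omega⟩
  rw [ThetaB1_eq_prod_rsmFactors, Nat.add_sub_cancel, Nat.add_sub_cancel, List.range'_concat,
    show 1 + 1 * m = m + 1 by omega, Nat.sub_sub]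
  simp only [rsmFactors, List.reverse_append, List.reverse_singleton, List.map_append,
    List.map_singleton, List.prod_append, List.prod_singleton, mul_assoc]

theorem ThetaB1_self (hn : 1 ≤ n) :
    ThetaB1 n a b c n = ((List.range' 1 (n - 1)).reverse.map fun k => 1 + a n k).prod *
      (1 + c n) * ((List.range' 1 (n - 1)).map fun k => 1 + b k n).prod * (1 + c n) := by
  obtain ⟨m, rfl⟩ : ∃ m, n = m + 1 := ⟨n - 1, by omega⟩
  have hfilter : ((List.range' 1 (m + 1)).filter fun k => decide (k ≠ m + 1)) =
      List.range' 1 m := by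
    rw [List.range'_concat, List.filter_append,
      filter_ne_eq_self fun k hk => by rw [List.mem_range'_1] at hk; omega,
      show 1 + 1 * m = m + 1 by omega]
    simp
  rw [ThetaB1, hfilter]
  simp

theorem map_rsmFactors (s : A →+* A) {j j' : ℕ} {l m r : List ℕ} {τ : ℕ → ℕ}
    (ha : ∀ k ∈ l ++ r, s (a j k) = a j' k) (hb : ∀ k ∈ m, s (b k j) = b (τ k) j')
    (hc : s (c j) = c j') :
    (rsmFactors a b c j l m r).map s = rsmFactors a b c j' l (m.map τ) r := by
  have hl : ∀ k ∈ l.reverse, 1 + s (a j k) = 1 + a j' k := fun k hk => by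
    rw [ha k (List.mem_append_left r (List.mem_reverse.1 hk))]
  have hm : ∀ k ∈ m, 1 + s (b k j) = 1 + b (τ k) j' := fun k hk => by rw [hb k hk]
  have hr : ∀ k ∈ r.reverse, 1 + s (a j k) = 1 + a j' k := fun k hk => by
    rw [ha k (List.mem_append_right l (List.mem_reverse.1 hk))]
  simp only [rsmFactors, List.map_append, List.map_map, List.map_singleton, Function.comp_def,
    map_add, map_one, hc]
  rw [List.map_congr_left hl, List.map_congr_left hm, List.map_congr_left hr]

theorem IsTwistedDerivation.map_rsmFactors_prod_eq_zero {s : A →+* A} {Δ : A →+ A}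
    (hΔ : IsTwistedDerivation s Δ) {j : ℕ} {l m r : List ℕ}
    (ha : ∀ k ∈ l ++ r, Δ (a j k) = 0) (hb : ∀ k ∈ m, Δ (b k j) = 0) (hc : Δ (c j) = 0) :
    Δ (rsmFactors a b c j l m r).prod = 0 := by
  refine hΔ.map_list_prod_eq_zero fun x hx => ?_
  simp only [rsmFactors, List.mem_append, List.mem_map, List.mem_reverse,
    List.mem_singleton] at hx
  rcases hx with (((⟨k, hk, rfl⟩ | rfl) | ⟨k, hk, rfl⟩) | rfl) | ⟨k, hk, rfl⟩ <;>
    rw [hΔ.map_one_add]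
  exacts [ha k (List.mem_append_left r hk), hc, hb k hk, hc, ha k (List.mem_append_right l hk)]

theorem IsTwistedDerivation.map_ThetaB1_eq_zero {s : A →+* A} {Δ : A →+ A}
    (hΔ : IsTwistedDerivation s Δ) {j : ℕ} (hj : j ≤ n)
    (ha : ∀ k, inR n k → k ≠ j → Δ (a j k) = 0) (hb : ∀ k, inR n k → k ≠ j → Δ (b k j) = 0)
    (hc : Δ (c j) = 0) :
    Δ (ThetaB1 n a b c j) = 0 := by
  rw [ThetaB1_eq_prod_rsmFactors]
  refine hΔ.map_rsmFactors_prod_eq_zero (fun k hk => ha k ⟨?_, ?_⟩ ?_)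
    (fun k hk => hb k ⟨?_, ?_⟩ ?_) hc <;>
    simp only [List.mem_append, List.mem_filter, List.mem_range'_1, decide_eq_true_eq] at hk <;>
    omega

end RSMFactors

section Derivations

variable {A : Type*} [Ring A]

theorem val_inv_eq_of_val_eq_mul_one_add {L B L' B' e : A} (U : Aˣ)
    (hU : (U : A) = L * (1 + e) * B * (1 + e)) (he : e * e = 0) (hB : B * B' = 1)
    (hL : L * L' = 1) :
    ((U⁻¹ : Aˣ) : A) = (1 - e) * B' * (1 - e) * L' := by
  refine Units.inv_eq_of_mul_eq_one_right ?_
  rw [hU]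
  simp only [mul_assoc]
  rw [← mul_assoc (1 + e) (1 - e), one_add_mul_one_sub_of_mul_self_eq_zero he, one_mul,
    ← mul_assoc B B', hB, one_mul, ← mul_assoc (1 + e) (1 - e),
    one_add_mul_one_sub_of_mul_self_eq_zero he, one_mul, hL]

namespace IsTwistedDerivation

variable {s : A →+* A} {Δ : A →+ A} {n : ℕ} {a b : ℕ → ℕ → A} {c : ℕ → A}

theorem one_sub_mul_map_eq_one_add_inv (hΔ : IsTwistedDerivation s Δ) {L B e : A} (U : Aˣ)
    (hU : (U : A) = L * (1 + e) * B * (1 + e)) (hL : Δ L = 0) (hB : Δ B = 0) (he : Δ e = 1)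
    (hse : s e = -e) (hee : e * e = 0) (hsLB : s L * B = 1) (hBsL : B * s L = 1)
    (hLsB : L * s B = 1) :
    (1 - e) * Δ U = 1 + ((U⁻¹ : Aˣ) : A) := by
  have h1e : Δ (1 + e) = 1 := by rw [hΔ.map_one_add, he]
  have hs1e : s (1 + e) = 1 - e := by rw [map_add, map_one, hse, sub_eq_add_neg]
  rw [val_inv_eq_of_val_eq_mul_one_add U hU hee hBsL hLsB, hU, hΔ,
    hΔ.map_mul_of_map_right_eq_zero _ hB, hΔ.map_mul_of_map_left_eq_zero hL, h1e,
    map_mul, map_mul, hs1e, mul_one, mul_one, hsLB, one_mul, mul_add,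
    one_sub_mul_one_add_of_mul_self_eq_zero hee]
  simp only [mul_assoc]

theorem mul_map_ThetaB1_of_transposition (hΔ : IsTwistedDerivation s Δ)
    (rels : BEBnRels n a b c) {i : ℕ} (hi : 1 ≤ i) (hin : i + 1 ≤ n)
    (hsa : ∀ k l, inR n k → inR n l → k ≠ l → s (a k l) = a (sigma i k) (sigma i l))
    (hsb : ∀ k l, inR n k → inR n l → k ≠ l → s (b k l) = b (sigma i k) (sigma i l))
    (hsc : ∀ k, inR n k → s (c k) = c (sigma i k)) (hΔa' : Δ (a i (i + 1)) = 1)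
    (hΔa : ∀ k l, inR n k → inR n l → k ≠ l → ¬(k = i ∧ l = i + 1) → ¬(k = i + 1 ∧ l = i) →
      Δ (a k l) = 0)
    (hΔb : ∀ k l, inR n k → inR n l → k ≠ l → Δ (b k l) = 0) (hΔc : ∀ k, inR n k → Δ (c k) = 0) :
    (1 + a (i + 1) i) * Δ (ThetaB1 n a b c i) = ThetaB1 n a b c (i + 1) ∧
      (1 + a (i + 1) i) * Δ (ThetaB1 n a b c (i + 1)) = -ThetaB1 n a b c (i + 1) := by
  have hiR : inR n i := ⟨hi, by omega⟩
  have hi1R : inR n (i + 1) := ⟨by omega, hin⟩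
  set l := List.range' 1 (i - 1)
  set r := List.range' (i + 2) (n - i - 1)
  have hlr : ∀ k ∈ l ++ r, inR n k ∧ k ≠ i ∧ k ≠ i + 1 := fun k hk => by
    simp only [l, r, List.mem_append, List.mem_range'_1] at hk
    exact ⟨⟨by omega, by omega⟩, by omega, by omega⟩
  set P := (rsmFactors a b c i l ((List.range' 1 n).filter fun k => decide (k ≠ i)) r).prod
  have hsP : s P = (rsmFactors a b c (i + 1) l
      ((List.range' 1 n).filter fun k => decide (k ≠ i + 1)) r).prod := by
    rw [map_list_prod, ← map_sigma_filter_range' hi hin]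
    refine congrArg List.prod (map_rsmFactors s (fun k hk => ?_) (fun k hk => ?_) ?_)
    · obtain ⟨hkR, hki, hki1⟩ := hlr k hk
      rw [hsa i k hiR hkR (Ne.symm hki), sigma_self, sigma_of_ne hki hki1]
    · obtain ⟨hkR, hki⟩ := inR_of_mem_filter_range' hk
      rw [hsb k i hkR hiR hki, sigma_self]
    · rw [hsc i hiR, sigma_self]
  have hΔP : Δ P = 0 := by
    refine hΔ.map_rsmFactors_prod_eq_zero (fun k hk => ?_) (fun k hk => ?_) (hΔc i hiR)
    · obtain ⟨hkR, hki, hki1⟩ := hlr k hk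
      exact hΔa i k hiR hkR (Ne.symm hki) (by omega) (by omega)
    · obtain ⟨hkR, hki⟩ := inR_of_mem_filter_range' hk
      exact hΔb k i hkR hiR hki
  have hΔsP : Δ (s P) = 0 := by
    rw [hsP]
    refine hΔ.map_rsmFactors_prod_eq_zero (fun k hk => ?_) (fun k hk => ?_) (hΔc (i + 1) hi1R)
    · obtain ⟨hkR, hki, hki1⟩ := hlr k hk
      exact hΔa (i + 1) k hi1R hkR (Ne.symm hki1) (by omega) (by omega)
    · obtain ⟨hkR, hki⟩ := inR_of_mem_filter_range' hk
      exact hΔb k (i + 1) hkR hi1R hki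
  have hΔh : Δ (1 + a (i + 1) i) = -1 := by
    rw [hΔ.map_one_add, rels.r0a (i + 1) i hi1R hiR (by omega), map_neg, hΔa']
  rw [ThetaB1_eq_prod_rsmFactors_mul hin, ThetaB1_succ_eq_mul_prod_rsmFactors hi, ← hsP]
  constructor
  · rw [hΔ.map_mul_of_map_left_eq_zero hΔP, hΔ.map_one_add, hΔa', mul_one]
  · rw [hΔ.map_mul_of_map_right_eq_zero _ hΔsP, hΔh, neg_one_mul, mul_neg]

theorem one_sub_mul_map_ThetaB1_self (hΔ : IsTwistedDerivation s Δ) (rels : BEBnRels n a b c)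
    (hn : 1 ≤ n) (U : Aˣ) (hU : (U : A) = ThetaB1 n a b c n)
    (hsa : ∀ k, inR n k → k ≠ n → s (a k n) = b k n)
    (hsb : ∀ k, inR n k → k ≠ n → s (b k n) = a k n) (hsc : s (c n) = -c n)
    (hΔa : ∀ k, inR n k → k ≠ n → Δ (a n k) = 0) (hΔb : ∀ k, inR n k → k ≠ n → Δ (b k n) = 0)
    (hΔc : Δ (c n) = 1) :
    (1 - c n) * Δ (ThetaB1 n a b c n) = 1 + ((U⁻¹ : Aˣ) : A) := by
  have hnR : inR n n := ⟨hn, le_rfl⟩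
  set l := List.range' 1 (n - 1)
  have hl : ∀ k ∈ l, inR n k ∧ k ≠ n := fun k hk => by
    rw [List.mem_range'_1] at hk
    exact ⟨⟨hk.1, by omega⟩, by omega⟩
  have hl' : ∀ k ∈ l.reverse, inR n k ∧ k ≠ n := fun k hk => hl k (List.mem_reverse.1 hk)
  set L := (l.reverse.map fun k => 1 + a n k).prod
  set B := (l.map fun k => 1 + b k n).prod
  have hL : L = (l.reverse.map fun k => 1 - a k n).prod :=
    congrArg List.prod <| List.map_congr_left fun k hk => by
      rw [rels.r0a n k hnR (hl' k hk).1 (hl' k hk).2.symm, sub_eq_add_neg]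
  have hsL : s L = (l.reverse.map fun k => 1 - b k n).prod := by
    rw [hL, map_list_prod, List.map_map]
    exact congrArg List.prod <| List.map_congr_left fun k hk => by
      rw [Function.comp_apply, map_sub, map_one, hsa k (hl' k hk).1 (hl' k hk).2]
  have hsB : s B = (l.map fun k => 1 + a k n).prod := by
    rw [map_list_prod, List.map_map]
    exact congrArg List.prod <| List.map_congr_left fun k hk => by
      rw [Function.comp_apply, map_add, map_one, hsb k (hl k hk).1 (hl k hk).2]
  obtain ⟨hsLB, hBsL⟩ : s L * B = 1 ∧ B * s L = 1 := hsL ▸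
    list_prod_one_sub_mul_prod_one_add l fun k hk => rels.r1b k n (hl k hk).1 hnR (hl k hk).2
  have hLsB : L * s B = 1 := hL ▸ hsB ▸
    (list_prod_one_sub_mul_prod_one_add l fun k hk => rels.r1a k n (hl k hk).1 hnR (hl k hk).2).1
  have hΔL : Δ L = 0 := hΔ.map_list_prod_eq_zero <| List.forall_mem_map.2 fun k hk => by
    rw [hΔ.map_one_add, hΔa k (hl' k hk).1 (hl' k hk).2]
  have hΔB : Δ B = 0 := hΔ.map_list_prod_eq_zero <| List.forall_mem_map.2 fun k hk => by
    rw [hΔ.map_one_add, hΔb k (hl k hk).1 (hl k hk).2]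
  rw [← hU]
  exact hΔ.one_sub_mul_map_eq_one_add_inv U (hU.trans (ThetaB1_self hn)) hΔL hΔB hΔc hsc
    (rels.r1c n hnR) hsLB hBsL hLsB

end IsTwistedDerivation

end Derivations

/-- in `𝒷ℰ(B_n)`, with `Θ_j := Θ_j^{B_n}(1,1)`:
(a) for `1 ≤ i ≤ n-1`, if `Δ` is a `ℚ`-linear map with the twisted Leibniz rule
`Δ(uv) = Δ(u)v + s_i(u)Δ(v)`, `Δ([i,i+1]) = 1`, and `Δ` vanishing on every other
generator, then `Q = h_{i,i+1}⁻¹ ∘ Δ` satisfies `Q(Θ_i) = Θ_{i+1}`,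
`Q(Θ_{i+1}) = -Θ_{i+1}`, `Q(Θ_j) = 0` for `j ≠ i, i+1`;
(b) if `Δ_n` is a `ℚ`-linear map with `Δ_n(uv) = Δ_n(u)v + s_n(u)Δ_n(v)`,
`Δ_n([n]) = 1`, vanishing on the other generators, then `Q_n = h_n⁻¹ ∘ Δ_n` satisfies
`Q_n(Θ_n) = 1 + Θ_n⁻¹` and `Q_n(Θ_j) = 0` for `j ≠ n`. -/
theorem twisted_derivations_on_RSM_elements (n : ℕ) (hn : 2 ≤ n)
    (A : Type*) [Ring A] [Algebra ℚ A]
    (a b : ℕ → ℕ → A) (c : ℕ → A) (rels : BEBnRels n a b c) :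
    ((∀ i, 1 ≤ i → i + 1 ≤ n → ∀ (s : A ≃ₐ[ℚ] A) (Δ : A →ₗ[ℚ] A),
      (∀ k l, inR n k → inR n l → k ≠ l → s (a k l) = a (sigma i k) (sigma i l)) →
      (∀ k l, inR n k → inR n l → k ≠ l → s (b k l) = b (sigma i k) (sigma i l)) →
      (∀ k, inR n k → s (c k) = c (sigma i k)) →
      (∀ u v : A, Δ (u * v) = Δ u * v + s u * Δ v) →
      Δ (a i (i + 1)) = 1 →
      (∀ k l, inR n k → inR n l → k ≠ l → ¬(k = i ∧ l = i + 1) → ¬(k = i + 1 ∧ l = i) →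
        Δ (a k l) = 0) →
      (∀ k l, inR n k → inR n l → k ≠ l → Δ (b k l) = 0) →
      (∀ k, inR n k → Δ (c k) = 0) →
      ((1 + a (i + 1) i) * Δ (ThetaB1 n a b c i) = ThetaB1 n a b c (i + 1) ∧
       (1 + a (i + 1) i) * Δ (ThetaB1 n a b c (i + 1)) = -ThetaB1 n a b c (i + 1) ∧
       ∀ j, inR n j → j ≠ i → j ≠ i + 1 →
         (1 + a (i + 1) i) * Δ (ThetaB1 n a b c j) = 0)) ∧
    (∀ (sn : A ≃ₐ[ℚ] A) (Δn : A →ₗ[ℚ] A) (U : Aˣ),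
      (U : A) = ThetaB1 n a b c n →
      (∀ k l, inR n k → inR n l → k ≠ l → k ≠ n → l ≠ n →
        sn (a k l) = a k l ∧ sn (b k l) = b k l) →
      (∀ k, inR n k → k ≠ n →
        sn (c k) = c k ∧ sn (a k n) = b k n ∧ sn (b k n) = a k n) →
      sn (c n) = -c n →
      (∀ u v : A, Δn (u * v) = Δn u * v + sn u * Δn v) →
      Δn (c n) = 1 →
      (∀ k l, inR n k → inR n l → k ≠ l → Δn (a k l) = 0 ∧ Δn (b k l) = 0) →
      (∀ k, inR n k → k ≠ n → Δn (c k) = 0) →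
      ((1 - c n) * Δn (ThetaB1 n a b c n) = 1 + ((U⁻¹ : Aˣ) : A) ∧
       ∀ j, inR n j → j ≠ n → (1 - c n) * Δn (ThetaB1 n a b c j) = 0))) := by
  refine ⟨fun i hi hin s Δ hsa hsb hsc hL hΔa' hΔa hΔb hΔc => ?_,
    fun sn Δn U hU _ hsn hscn hL hΔc' hΔab hΔc => ?_⟩
  · have hΔ : IsTwistedDerivation (s : A →+* A) Δ.toAddMonoidHom := hL
    obtain ⟨hΘi, hΘi1⟩ :=
      hΔ.mul_map_ThetaB1_of_transposition rels hi hin hsa hsb hsc hΔa' hΔa hΔb hΔc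
    refine ⟨hΘi, hΘi1, fun j hj hji hji1 => ?_⟩
    have hΘj : Δ (ThetaB1 n a b c j) = 0 :=
      hΔ.map_ThetaB1_eq_zero hj.2 (fun k hk hkj => hΔa j k hj hk hkj.symm (by omega) (by omega))
        (fun k hk hkj => hΔb k j hk hj hkj) (hΔc j hj)
    rw [hΘj, mul_zero]
  · have hΔ : IsTwistedDerivation (sn : A →+* A) Δn.toAddMonoidHom := hL
    have hnR : inR n n := ⟨by omega, le_rfl⟩
    refine ⟨hΔ.one_sub_mul_map_ThetaB1_self rels hnR.1 U hU (fun k hk hkn => (hsn k hk hkn).2.1)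
      (fun k hk hkn => (hsn k hk hkn).2.2) hscn (fun k hk hkn => (hΔab n k hnR hk hkn.symm).1)
      (fun k hk hkn => (hΔab k n hk hnR hkn).2) hΔc', fun j hj hjn => ?_⟩
    have hΘj : Δn (ThetaB1 n a b c j) = 0 :=
      hΔ.map_ThetaB1_eq_zero hj.2 (fun k hk hkj => (hΔab j k hj hk hkj.symm).1)
        (fun k hk hkj => (hΔab k j hk hj hkj).2) (hΔc j hj hjn)
    rw [hΘj, mul_zero]

end Stmt16
end

section
/- In the group YB(G_2), the RSM-elements commute: Θ_1^{G_2} Θ_2^{G_2} = Θ_2^{G_2} Θ_1^{G_2}. -/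
namespace Stmt18

/-- in the group `YB(G_2)` — presented by generators
`h_a, …, h_f` with the commutativity relations, the `A_2` Yang–Baxter relation and the
`G_2` Yang–Baxter relation — the RSM-elements
`Θ_1 = h_d h_b h_c h_d h_e h_f` and `Θ_2 = h_f⁻¹ h_b h_d h_c h_b h_a` commute. -/
theorem RSM_elements_commute_in_YB_G2 (G : Type*) [Group G]
    (ha hb hc hd he hf : G)
    (comm_ad : ha * hd = hd * ha)
    (comm_be : hb * he = he * hb)
    (comm_cf : hc * hf = hf * hc)
    (ybA2 : hb * hd * hf = hf * hd * hb)
    (ybG2 : ha * hb * hc * hd * he * hf = hf * he * hd * hc * hb * ha) :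
    (hd * hb * hc * hd * he * hf) * (hf⁻¹ * hb * hd * hc * hb * ha) =
      (hf⁻¹ * hb * hd * hc * hb * ha) * (hd * hb * hc * hd * he * hf) := by
  -- right-associated versions of the relations, with a tail
  have cad : ∀ x : G, ha * (hd * x) = hd * (ha * x) := fun x => by
    rw [← mul_assoc, comm_ad, mul_assoc]
  have ceb : ∀ x : G, he * (hb * x) = hb * (he * x) := fun x => by
    rw [← mul_assoc, ← comm_be, mul_assoc]
  have cfc : ∀ x : G, hf * (hc * x) = hc * (hf * x) := fun x => by
    rw [← mul_assoc, ← comm_cf, mul_assoc]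
  have a2 : ∀ x : G, hb * (hd * (hf * x)) = hf * (hd * (hb * x)) := fun x => by
    rw [← mul_assoc, ← mul_assoc, ybA2, mul_assoc, mul_assoc]
  have g2 : ∀ x : G, ha * (hb * (hc * (hd * (he * (hf * x))))) =
      hf * (he * (hd * (hc * (hb * (ha * x))))) := fun x => by
    simpa only [mul_assoc] using congrArg (· * x) ybG2
  -- the key lemma: f (d b c d b) = (b d c b d) f, with tail
  have key : ∀ x : G, hb * (hd * (hc * (hb * (hd * (hf * x))))) =
      hf * (hd * (hb * (hc * (hd * (hb * x))))) := fun x => by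
    rw [a2, ← cfc, a2]
  have g2' : ha * (hb * (hc * (hd * (he * hf)))) =
      hf * (he * (hd * (hc * (hb * ha)))) := by simpa only [mul_assoc] using ybG2
  simp only [mul_assoc, inv_mul_cancel_left, mul_inv_cancel_left]
  rw [ceb, cad, g2', key, inv_mul_cancel_left]
end Stmt18
end
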